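/- arXiv:1402.5621 — 8 statements merged into one kernel-verified Lean document; each statement's English description precedes it below -/
import Mathlib

section
/- Let G be a simple bipartite graph with bipartition (U,V), |U| = p, |V| = q, and degree sequences d_1 ≥ d_2 ≥ ... ≥ d_p (degrees of vertices in U) and d'_1 ≥ d'_2 ≥ ... ≥ d'_q (degrees of vertices in V). Then for every 1 ≤ s ≤ p and 1 ≤ t ≤ q, the spectral radius satisfies ρ(G) ≤ φ_{s,t}. -/
open Finset Matrix

lemma exists_eigvec {n : Type*} [Fintype n] [DecidableEq n] {M : Matrix n n ℝ} {μ : ℝ}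
    (hμ : μ ∈ spectrum ℝ M) : ∃ x : n → ℝ, x ≠ 0 ∧ M.mulVec x = μ • x := by
  rw [spectrum.mem_iff] at hμ
  rw [Matrix.isUnit_iff_isUnit_det, isUnit_iff_ne_zero, not_not] at hμ
  obtain ⟨v, hv0, hv⟩ := Matrix.exists_mulVec_eq_zero_iff.mpr hμ
  refine ⟨v, hv0, ?_⟩
  rw [Matrix.sub_mulVec, Algebra.algebraMap_eq_smul_one, Matrix.smul_mulVec,
    Matrix.one_mulVec] at hv
  exact (sub_eq_zero.mp hv).symm

lemma eig_le {n : Type*} [Fintype n] [DecidableEq n] (G : SimpleGraph n) [DecidableRel G.Adj]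
    (lam : ℝ) (hlam : 0 ≤ lam) (c : n → ℝ) (hc : ∀ i, 0 < c i)
    (hrow : ∀ v, ∑ w ∈ G.neighborFinset v, c w ≤ lam * c v)
    {μ : ℝ} (hμ : μ ∈ spectrum ℝ (G.adjMatrix ℝ)) : μ ≤ lam := by
  rcases le_or_gt μ 0 with h | hμpos
  · linarith
  obtain ⟨x, hx0, hx⟩ := exists_eigvec hμ
  set y : n → ℝ := fun i => |x i| with hy
  have hy0 : ∀ i, 0 ≤ y i := fun i => abs_nonneg _
  have hAy : ∀ i, μ * y i ≤ ∑ w ∈ G.neighborFinset i, y w := by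
    intro i
    have h1 : μ * y i = |μ * x i| := by
      rw [abs_mul, abs_of_pos hμpos]
    have h2 : μ * x i = ∑ w ∈ G.neighborFinset i, x w := by
      have := congrFun hx i
      simp only [Pi.smul_apply, smul_eq_mul] at this
      rw [← this, SimpleGraph.adjMatrix_mulVec_apply]
    rw [h1, h2]
    exact Finset.abs_sum_le_sum_abs _ _
  have key : μ * ∑ i, y i * c i ≤ lam * ∑ i, y i * c i := by
    rw [Finset.mul_sum, Finset.mul_sum]
    calc ∑ i, μ * (y i * c i) = ∑ i, (μ * y i) * c i := by
          apply Finset.sum_congr rfl; intro i _; ring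
      _ ≤ ∑ i, (∑ w ∈ G.neighborFinset i, y w) * c i := by
          apply Finset.sum_le_sum; intro i _
          exact mul_le_mul_of_nonneg_right (hAy i) (hc i).le
      _ = ∑ i, ∑ w, (if G.Adj i w then y w * c i else 0) := by
          apply Finset.sum_congr rfl; intro i _
          rw [Finset.sum_mul, SimpleGraph.neighborFinset_eq_filter, Finset.sum_filter]
      _ = ∑ w, ∑ i, (if G.Adj i w then y w * c i else 0) := Finset.sum_comm
      _ = ∑ w, y w * ∑ i ∈ G.neighborFinset w, c i := by
          apply Finset.sum_congr rfl; intro w _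
          rw [SimpleGraph.neighborFinset_eq_filter, Finset.mul_sum, Finset.sum_filter]
          apply Finset.sum_congr rfl; intro i _
          simp [G.adj_comm]
      _ ≤ ∑ w, y w * (lam * c w) := by
          apply Finset.sum_le_sum; intro w _
          exact mul_le_mul_of_nonneg_left (hrow w) (hy0 w)
      _ = ∑ w, lam * (y w * c w) := by
          apply Finset.sum_congr rfl; intro w _; ring
  have hP : 0 < ∑ i, y i * c i := by
    obtain ⟨i0, hi0⟩ := Function.ne_iff.mp hx0
    apply Finset.sum_pos' (fun i _ => mul_nonneg (hy0 i) (hc i).le)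
    exact ⟨i0, Finset.mem_univ _, mul_pos (abs_pos.mpr hi0) (hc i0)⟩
  exact le_of_mul_le_mul_right (by linarith [key]) hP


lemma sum_max_le {m : ℕ} (d : Fin m → ℝ) (t : Fin m)
    (hmono : ∀ i j : Fin m, i ≤ j → d j ≤ d i) (F : Finset (Fin m)) :
    ∑ j ∈ F, max (d j - d t) 0 ≤ ∑ j ∈ univ.filter (fun j => j < t), (d j - d t) := by
  calc ∑ j ∈ F, max (d j - d t) 0 ≤ ∑ j ∈ univ, max (d j - d t) 0 :=
      Finset.sum_le_sum_of_subset_of_nonneg (Finset.subset_univ F)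
        (fun i _ _ => le_max_right _ _)
    _ = ∑ j ∈ univ.filter (fun j => j < t), max (d j - d t) 0 := by
      symm
      apply Finset.sum_subset (Finset.filter_subset _ _)
      intro j _ hj
      simp only [mem_filter, mem_univ, true_and, not_lt] at hj
      simp [max_eq_right, sub_nonpos.mpr (hmono t j hj)]
    _ = ∑ j ∈ univ.filter (fun j => j < t), (d j - d t) := by
      apply Finset.sum_congr rfl
      intro j hj
      simp only [mem_filter] at hj
      exact max_eq_left (sub_nonneg.mpr (hmono j t hj.2.le))


noncomputable def specRad {V : Type*} [Fintype V] (G : SimpleGraph V) : ℝ :=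
  letI := Classical.decEq V
  letI := Classical.decRel G.Adj
  sSup (spectrum ℝ (G.adjMatrix ℝ))

theorem stmt2 (p q : ℕ) (G : SimpleGraph (Fin p ⊕ Fin q)) [DecidableRel G.Adj]
    (hL : ∀ i j : Fin p, ¬ G.Adj (Sum.inl i) (Sum.inl j))
    (hR : ∀ i j : Fin q, ¬ G.Adj (Sum.inr i) (Sum.inr j))
    (hdU : ∀ i j : Fin p, i ≤ j → G.degree (Sum.inl j) ≤ G.degree (Sum.inl i))
    (hdV : ∀ i j : Fin q, i ≤ j → G.degree (Sum.inr j) ≤ G.degree (Sum.inr i))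
    (s : Fin p) (t : Fin q) (X Y : ℝ)
    (hX : X = (G.degree (Sum.inl s) : ℝ) * (G.degree (Sum.inr t) : ℝ)
      + ∑ i ∈ Finset.univ.filter (fun i : Fin p => i < s),
          ((G.degree (Sum.inl i) : ℝ) - (G.degree (Sum.inl s) : ℝ))
      + ∑ j ∈ Finset.univ.filter (fun j : Fin q => j < t),
          ((G.degree (Sum.inr j) : ℝ) - (G.degree (Sum.inr t) : ℝ)))
    (hY : Y = (∑ i ∈ Finset.univ.filter (fun i : Fin p => i < s),
          ((G.degree (Sum.inl i) : ℝ) - (G.degree (Sum.inl s) : ℝ)))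
      * (∑ j ∈ Finset.univ.filter (fun j : Fin q => j < t),
          ((G.degree (Sum.inr j) : ℝ) - (G.degree (Sum.inr t) : ℝ)))) :
    specRad G ≤ Real.sqrt ((X + Real.sqrt (X^2 - 4*Y)) / 2) := by
  obtain ⟨ds, hds_def⟩ : ∃ x : ℝ, x = (G.degree (Sum.inl s) : ℝ) := ⟨_, rfl⟩
  obtain ⟨dt, hdt_def⟩ : ∃ x : ℝ, x = (G.degree (Sum.inr t) : ℝ) := ⟨_, rfl⟩
  obtain ⟨S, hS_def⟩ : ∃ x : ℝ, x = ∑ i ∈ Finset.univ.filter (fun i : Fin p => i < s),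
      ((G.degree (Sum.inl i) : ℝ) - (G.degree (Sum.inl s) : ℝ)) := ⟨_, rfl⟩
  obtain ⟨T, hT_def⟩ : ∃ x : ℝ, x = ∑ j ∈ Finset.univ.filter (fun j : Fin q => j < t),
      ((G.degree (Sum.inr j) : ℝ) - (G.degree (Sum.inr t) : ℝ)) := ⟨_, rfl⟩
  rw [← hS_def, ← hT_def, ← hds_def, ← hdt_def] at hX
  rw [← hS_def, ← hT_def] at hY
  have hds0 : 0 ≤ ds := by rw [hds_def]; exact Nat.cast_nonneg _
  have hdt0 : 0 ≤ dt := by rw [hdt_def]; exact Nat.cast_nonneg _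
  have hS0 : 0 ≤ S := by
    rw [hS_def]
    apply Finset.sum_nonneg
    intro i hi
    simp only [mem_filter] at hi
    exact sub_nonneg.mpr (Nat.cast_le.mpr (hdU i s hi.2.le))
  have hT0 : 0 ≤ T := by
    rw [hT_def]
    apply Finset.sum_nonneg
    intro j hj
    simp only [mem_filter] at hj
    exact sub_nonneg.mpr (Nat.cast_le.mpr (hdV j t hj.2.le))
  have hX0 : 0 ≤ X := by rw [hX]; nlinarith [mul_nonneg hds0 hdt0]
  have hdisc : 0 ≤ X^2 - 4*Y := by
    rw [hX, hY]
    nlinarith [sq_nonneg (S - T), mul_nonneg hds0 hdt0, sq_nonneg (ds*dt)]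
  obtain ⟨D, hD_def⟩ : ∃ x : ℝ, x = Real.sqrt (X^2 - 4*Y) := ⟨_, rfl⟩
  have hD2 : D^2 = X^2 - 4*Y := by rw [hD_def]; exact Real.sq_sqrt hdisc
  have hD0 : 0 ≤ D := by rw [hD_def]; exact Real.sqrt_nonneg _
  obtain ⟨r, hr_def⟩ : ∃ x : ℝ, x = (X + D)/2 := ⟨_, rfl⟩
  have hr0 : 0 ≤ r := by rw [hr_def]; linarith
  have hq_r : r^2 - X*r + Y = 0 := by rw [hr_def]; linear_combination hD2 / 4
  have hq_pos : ∀ z : ℝ, r < z → 0 < z^2 - X*z + Y := by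
    intro z hz
    have hDr : D = 2*r - X := by rw [hr_def]; ring
    have h2 : 0 < z + r - X := by linarith
    have h1 : 0 < z - r := by linarith
    nlinarith [mul_pos h1 h2, hq_r]
  have hSr : S ≤ r := by
    by_contra hcon
    push_neg at hcon
    have h1 := hq_pos S hcon
    have h2 : S^2 - X*S + Y = -(S * (ds*dt)) := by rw [hX, hY]; ring
    nlinarith [mul_nonneg hS0 (mul_nonneg hds0 hdt0)]
  have hTr : T ≤ r := by
    by_contra hcon
    push_neg at hcon
    have h1 := hq_pos T hcon
    have h2 : T^2 - X*T + Y = -(T * (ds*dt)) := by rw [hX, hY]; ring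
    nlinarith [mul_nonneg hT0 (mul_nonneg hds0 hdt0)]
  have hspec : specRad G = sSup (spectrum ℝ (G.adjMatrix ℝ)) := by
    unfold specRad
    rw [Subsingleton.elim (Classical.decRel G.Adj) ‹DecidableRel G.Adj›,
      Subsingleton.elim (Classical.decEq (Fin p ⊕ Fin q))
        (inferInstance : DecidableEq (Fin p ⊕ Fin q))]
  rw [hspec, ← hD_def, ← hr_def]
  apply Real.sSup_le _ (Real.sqrt_nonneg _)
  intro μ hμ
  by_contra hcon
  push_neg at hcon
  obtain ⟨lam, hlam_def⟩ : ∃ x : ℝ, x = (Real.sqrt r + μ)/2 := ⟨_, rfl⟩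
  have hsq0 := Real.sqrt_nonneg r
  have hlam1 : Real.sqrt r < lam := by rw [hlam_def]; linarith
  have hlam2 : lam < μ := by rw [hlam_def]; linarith
  have hlam0 : 0 < lam := lt_of_le_of_lt hsq0 hlam1
  have hrlam : r < lam^2 := by
    have h1 : Real.sqrt r * Real.sqrt r < lam * lam := mul_self_lt_mul_self hsq0 hlam1
    have h2 : Real.sqrt r * Real.sqrt r = r := Real.mul_self_sqrt hr0
    nlinarith [h1, h2]
  have hSlt : S < lam^2 := lt_of_le_of_lt hSr hrlam
  have hTlt : T < lam^2 := lt_of_le_of_lt hTr hrlam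
  have hβpos : 0 < lam^2 - T := by linarith
  have hΔpos : 0 < (lam^2 - S)*(lam^2 - T) - ds*dt*lam^2 := by
    have h := hq_pos (lam^2) hrlam
    rw [hX, hY] at h
    have hid : (lam^2 - S)*(lam^2 - T) - ds*dt*lam^2
        = (lam^2)^2 - (ds*dt+S+T)*lam^2 + S*T := by ring
    rw [hid]
    exact h
  have hdnm : 0 < dt*lam + 1 := by
    have := mul_nonneg hdt0 hlam0.le
    linarith
  obtain ⟨Δ, hΔ_def⟩ : ∃ x : ℝ, x = (lam^2 - S)*(lam^2 - T) - ds*dt*lam^2 := ⟨_, rfl⟩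
  rw [← hΔ_def] at hΔpos
  obtain ⟨δ, hδ_def⟩ : ∃ x : ℝ, x = ds * lam + Δ / (dt*lam + 1) := ⟨_, rfl⟩
  have hδpos : 0 < δ := by
    rw [hδ_def]
    exact add_pos_of_nonneg_of_pos (mul_nonneg hds0 hlam0.le) (div_pos hΔpos hdnm)
  have hδge : ds * lam ≤ δ := by
    rw [hδ_def]
    have := div_pos hΔpos hdnm
    linarith
  have hδkey : dt * lam * δ ≤ (lam^2 - S)*(lam^2 - T) := by
    have h1 : dt * lam * (Δ / (dt*lam+1)) ≤ Δ := by
      calc dt*lam*(Δ/(dt*lam+1)) ≤ (dt*lam+1)*(Δ/(dt*lam+1)) :=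
            mul_le_mul_of_nonneg_right (by linarith) (div_nonneg hΔpos.le hdnm.le)
        _ = Δ := mul_div_cancel₀ _ hdnm.ne'
    have h2 : dt*lam*δ = ds*dt*lam^2 + dt*lam*(Δ/(dt*lam+1)) := by rw [hδ_def]; ring
    have h3 : (lam^2-S)*(lam^2-T) = ds*dt*lam^2 + Δ := by rw [hΔ_def]; ring
    linarith
  have hUmono : ∀ i j : Fin p, i ≤ j → (G.degree (Sum.inl j):ℝ) ≤ (G.degree (Sum.inl i):ℝ) :=
    fun i j h => Nat.cast_le.mpr (hdU i j h)
  have hVmono : ∀ i j : Fin q, i ≤ j → (G.degree (Sum.inr j):ℝ) ≤ (G.degree (Sum.inr i):ℝ) :=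
    fun i j h => Nat.cast_le.mpr (hdV i j h)
  obtain ⟨c, hc_def⟩ : ∃ c : Fin p ⊕ Fin q → ℝ, c = Sum.elim
      (fun i => lam * δ + (lam^2 - T) * max ((G.degree (Sum.inl i):ℝ) - ds) 0)
      (fun j => lam * (lam^2 - T) + δ * max ((G.degree (Sum.inr j):ℝ) - dt) 0) := ⟨_, rfl⟩
  have hcpos : ∀ v, 0 < c v := by
    intro v
    cases v with
    | inl i =>
      rw [hc_def, Sum.elim_inl]
      exact add_pos_of_pos_of_nonneg (mul_pos hlam0 hδpos)
        (mul_nonneg hβpos.le (le_max_right _ _))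
    | inr j =>
      rw [hc_def, Sum.elim_inr]
      exact add_pos_of_pos_of_nonneg (mul_pos hlam0 hβpos)
        (mul_nonneg hδpos.le (le_max_right _ _))
  have hNl : ∀ i : Fin p, G.neighborFinset (Sum.inl i) =
      (univ.filter (fun j : Fin q => G.Adj (Sum.inl i) (Sum.inr j))).map
        ⟨Sum.inr, Sum.inr_injective⟩ := by
    intro i
    ext w
    cases w with
    | inl i' => simp [hL i i']
    | inr j => simp
  have hNr : ∀ j : Fin q, G.neighborFinset (Sum.inr j) =
      (univ.filter (fun i : Fin p => G.Adj (Sum.inr j) (Sum.inl i))).map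
        ⟨Sum.inl, Sum.inl_injective⟩ := by
    intro j
    ext w
    cases w with
    | inl i => simp
    | inr j' => simp [hR j j']
  have hrow : ∀ v, ∑ w ∈ G.neighborFinset v, c w ≤ lam * c v := by
    intro v
    cases v with
    | inl i =>
      rw [hNl i, Finset.sum_map, hc_def]
      simp only [Function.Embedding.coeFn_mk, Sum.elim_inr, Sum.elim_inl]
      have hcard : ((univ.filter (fun j : Fin q => G.Adj (Sum.inl i) (Sum.inr j))).card : ℝ)
          = (G.degree (Sum.inl i) : ℝ) := by
        rw [← SimpleGraph.card_neighborFinset_eq_degree, hNl i, Finset.card_map]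
      have hmaxT : ∑ j ∈ univ.filter (fun j : Fin q => G.Adj (Sum.inl i) (Sum.inr j)),
          max ((G.degree (Sum.inr j):ℝ) - dt) 0 ≤ T := by
        rw [hT_def, hdt_def]
        exact sum_max_le (fun j => (G.degree (Sum.inr j):ℝ)) t hVmono _
      have hsum : ∑ j ∈ univ.filter (fun j : Fin q => G.Adj (Sum.inl i) (Sum.inr j)),
          (lam * (lam^2 - T) + δ * max ((G.degree (Sum.inr j):ℝ) - dt) 0)
          ≤ (G.degree (Sum.inl i):ℝ) * (lam*(lam^2-T)) + δ * T := by
        rw [Finset.sum_add_distrib, Finset.sum_const, nsmul_eq_mul, ← Finset.mul_sum, hcard]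
        have := mul_le_mul_of_nonneg_left hmaxT hδpos.le
        linarith
      have hC1 : ds * (lam*(lam^2-T)) + δ*T ≤ lam*(lam*δ) := by
        have := mul_le_mul_of_nonneg_right hδge hβpos.le
        linarith [this]
      rcases le_or_gt ((G.degree (Sum.inl i):ℝ)) ds with hcase | hcase
      · rw [max_eq_right (sub_nonpos.mpr hcase)]
        have h5 : (G.degree (Sum.inl i):ℝ) * (lam*(lam^2-T)) ≤ ds * (lam*(lam^2-T)) :=
          mul_le_mul_of_nonneg_right hcase (mul_nonneg hlam0.le hβpos.le)
        linarith [hsum, h5, hC1]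
      · rw [max_eq_left (sub_nonneg.mpr hcase.le)]
        linarith [hsum, hC1]
    | inr j =>
      rw [hNr j, Finset.sum_map, hc_def]
      simp only [Function.Embedding.coeFn_mk, Sum.elim_inr, Sum.elim_inl]
      have hcard : ((univ.filter (fun i : Fin p => G.Adj (Sum.inr j) (Sum.inl i))).card : ℝ)
          = (G.degree (Sum.inr j) : ℝ) := by
        rw [← SimpleGraph.card_neighborFinset_eq_degree, hNr j, Finset.card_map]
      have hmaxS : ∑ i ∈ univ.filter (fun i : Fin p => G.Adj (Sum.inr j) (Sum.inl i)),
          max ((G.degree (Sum.inl i):ℝ) - ds) 0 ≤ S := by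
        rw [hS_def, hds_def]
        exact sum_max_le (fun i => (G.degree (Sum.inl i):ℝ)) s hUmono _
      have hsum : ∑ i ∈ univ.filter (fun i : Fin p => G.Adj (Sum.inr j) (Sum.inl i)),
          (lam * δ + (lam^2 - T) * max ((G.degree (Sum.inl i):ℝ) - ds) 0)
          ≤ (G.degree (Sum.inr j):ℝ) * (lam*δ) + (lam^2 - T) * S := by
        rw [Finset.sum_add_distrib, Finset.sum_const, nsmul_eq_mul, ← Finset.mul_sum, hcard]
        have := mul_le_mul_of_nonneg_left hmaxS hβpos.le
        linarith
      have hC3 : dt * (lam*δ) + (lam^2-T)*S ≤ lam*(lam*(lam^2-T)) := by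
        linarith [hδkey]
      rcases le_or_gt ((G.degree (Sum.inr j):ℝ)) dt with hcase | hcase
      · rw [max_eq_right (sub_nonpos.mpr hcase)]
        have h5 : (G.degree (Sum.inr j):ℝ) * (lam*δ) ≤ dt * (lam*δ) :=
          mul_le_mul_of_nonneg_right hcase (mul_nonneg hlam0.le hδpos.le)
        linarith [hsum, h5, hC3]
      · rw [max_eq_left (sub_nonneg.mpr hcase.le)]
        linarith [hsum, hC3]
  have hfin := eig_le G lam hlam0.le c hcpos hrow hμ
  linarith
end

section
/- Let G be a connected simple bipartite graph with bipartition (U,V), |U| = p, |V| = q, and degree sequences d_1 ≥ ... ≥ d_p on U and d'_1 ≥ ... ≥ d'_q on V, and let 1 ≤ s ≤ p, 1 ≤ t ≤ q. If there exist nonnegative integers s' < s and t' < t and a biregular bipartite graph H with bipartition orders p − s' and q − t' such that G is the bipartite sum K_{s',t'} + H, then ρ(G) = φ_{s,t}. -/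
open Matrix Finset Module.End

theorem Matrix.mem_spectrum_of_mulVec_eq_smul {K n : Type*} [Field K] [Fintype n] [DecidableEq n]
    {A : Matrix n n K} {x : n → K} {r : K} (hx : x ≠ 0) (h : A *ᵥ x = r • x) :
    r ∈ spectrum K A := by
  rw [← spectrum_toLin']
  exact (hasEigenvalue_of_hasEigenvector
    (hasEigenvector_iff.mpr ⟨by simpa using h, hx⟩)).mem_spectrum

theorem Fin.sum_filter_lt_eq_of_eqOn {R : Type*} [NonAssocSemiring R] {n m : ℕ} {k : Fin n}
    (hm : m ≤ k) {f : Fin n → R} {c : R} (hlt : ∀ i : Fin n, (i : ℕ) < m → f i = c)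
    (hge : ∀ i : Fin n, m ≤ i → f i = 0) :
    ∑ i ∈ univ.filter (· < k), f i = m * c := by
  have hsub : univ.filter (fun i : Fin n => (i : ℕ) < m) ⊆ univ.filter (· < k) := fun i hi => by
    simp only [mem_filter, mem_univ, true_and] at hi ⊢
    exact Fin.lt_def.mpr (hi.trans_le hm)
  rw [← sum_subset hsub fun i _ hi => hge i (by simpa using hi),
    sum_congr rfl fun i hi => hlt i (mem_filter.mp hi).2, Finset.sum_const, Fin.card_filter_val_lt,
    min_eq_right (hm.trans k.isLt.le), nsmul_eq_mul]

theorem sq_quadraticRoot {X Y : ℝ} (h : 0 ≤ X ^ 2 - 4 * Y) :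
    ((X + √(X ^ 2 - 4 * Y)) / 2) ^ 2 = X * ((X + √(X ^ 2 - 4 * Y)) / 2) - Y := by
  linear_combination Real.sq_sqrt h / 4

theorem lt_quadraticRoot_of_pos {a b c d : ℝ} (hb : 0 < b) (hcd : 0 < c ∨ a < d) :
    a < (a + d + √((a + d) ^ 2 - 4 * (a * d - b * c))) / 2 := by
  have hdisc : (a + d) ^ 2 - 4 * (a * d - b * c) = (a - d) ^ 2 + 4 * (b * c) := by ring
  suffices a - d < √((a - d) ^ 2 + 4 * (b * c)) by rw [hdisc]; linarith
  rcases hcd with hc | had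
  · calc a - d ≤ |a - d| := le_abs_self _
      _ = √((a - d) ^ 2) := (Real.sqrt_sq_eq_abs _).symm
      _ < √((a - d) ^ 2 + 4 * (b * c)) :=
        Real.sqrt_lt_sqrt (sq_nonneg _) (by linarith [mul_pos hb hc])
  · exact (sub_neg.mpr had).trans_le (Real.sqrt_nonneg _)

theorem exists_pos_quotient_eigenvector {p q s t D E X Y : ℝ} (hs : 0 ≤ s) (ht : 0 ≤ t)
    (htq : t < q) (htD : t ≤ D) (hDq : D ≤ q) (hsE : s ≤ E) (hEp : E ≤ p) (hD : 0 < D)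
    (hE : 0 < E) (hsD : 0 < s ∨ t < D) (hX : X = D * E + s * (q - D) + t * (p - E))
    (hY : Y = s * (q - D) * (t * (p - E))) :
    ∃ a b c d : ℝ, 0 < a ∧ 0 < b ∧ 0 < c ∧ 0 < d ∧
      √((X + √(X ^ 2 - 4 * Y)) / 2) * a = c * t + d * (q - t) ∧
      √((X + √(X ^ 2 - 4 * Y)) / 2) * b = c * t + d * (D - t) ∧
      √((X + √(X ^ 2 - 4 * Y)) / 2) * c = a * s + b * (p - s) ∧
      √((X + √(X ^ 2 - 4 * Y)) / 2) * d = a * s + b * (E - s) := by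
  -- `[[al, be], [ga, de]]` is the square of the quotient matrix on the classes `c`, `d`; its
  -- Perron root is `θ = φ ^ 2`, with Perron vector `(be, θ - al)`.
  set al := t * p with hal
  set be := s * (q - t) + (p - s) * (D - t) with hbe
  set ga := t * E with hga
  set de := s * (q - t) + (D - t) * (E - s) with hde
  have hXad : X = al + de := by rw [hX]; ring
  have hYad : Y = al * de - be * ga := by rw [hY]; ring
  have hbe0 : 0 < be := by rcases hsD with h | h <;> nlinarith
  have hdisc : 0 ≤ X ^ 2 - 4 * Y := by
    have : (al + de) ^ 2 - 4 * (al * de - be * ga) = (al - de) ^ 2 + 4 * (be * ga) := by ring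
    rw [hXad, hYad, this]
    have : 0 ≤ be * ga := mul_nonneg hbe0.le (mul_nonneg ht hE.le)
    positivity
  set θ := (X + √(X ^ 2 - 4 * Y)) / 2 with hθ
  have hroot : θ ^ 2 = X * θ - Y := sq_quadraticRoot hdisc
  have hθal : al < θ := by
    rw [hθ, hXad, hYad]
    refine lt_quadraticRoot_of_pos hbe0 ?_
    rcases ht.eq_or_lt with rfl | ht
    · right; simp only [al, de]; nlinarith
    · left; positivity
  have hθ0 : 0 < θ := (mul_nonneg ht (by linarith)).trans_lt hθal
  set φ := √θ
  have hφ : 0 < φ := Real.sqrt_pos.mpr hθ0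
  have hφθ : φ ^ 2 = θ := Real.sq_sqrt hθ0.le
  rw [hXad, hYad] at hroot
  clear_value φ θ al be ga de
  refine ⟨(be * t + (θ - al) * (q - t)) / φ, (be * t + (θ - al) * (D - t)) / φ, be, θ - al,
    ?_, ?_, hbe0, by linarith, ?_, ?_, ?_, ?_⟩
  · refine div_pos ?_ hφ
    nlinarith [mul_nonneg hbe0.le ht]
  · refine div_pos ?_ hφ
    rcases ht.eq_or_lt with rfl | ht <;> nlinarith
  · field_simp
  · field_simp
  · field_simp
    rw [hφθ]
    subst al be
    ring
  · field_simp
    rw [hφθ]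
    subst al be ga de
    linear_combination hroot

namespace SimpleGraph

section Spectral

variable {V : Type*} [Fintype V] {G : SimpleGraph V} [DecidableRel G.Adj]

theorem specRad_eq_sSup [DecidableEq V] : specRad G = sSup (spectrum ℝ (G.adjMatrix ℝ)) := by
  unfold specRad
  congr!

theorem abs_le_of_mem_spectrum_of_pos_eigenvector [DecidableEq V] {x : V → ℝ} {r μ : ℝ}
    (hx : ∀ v, 0 < x v) (h : G.adjMatrix ℝ *ᵥ x = r • x)
    (hμ : μ ∈ spectrum ℝ (G.adjMatrix ℝ)) : |μ| ≤ r := by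
  rw [← spectrum_toLin', ← hasEigenvalue_iff_mem_spectrum] at hμ
  obtain ⟨w, hw, hw0⟩ : ∃ w, G.adjMatrix ℝ *ᵥ w = μ • w ∧ w ≠ 0 := by
    simpa [hasEigenvector_iff] using hμ.exists_hasEigenvector
  have hpt : ∀ v, |μ| * |w v| ≤ (G.adjMatrix ℝ *ᵥ |w|) v := fun v => by
    rw [← abs_mul, ← smul_eq_mul, ← Pi.smul_apply, ← hw, adjMatrix_mulVec_apply,
      adjMatrix_mulVec_apply]
    exact abs_sum_le_sum_abs _ _
  have hpos : 0 < |w| ⬝ᵥ x := by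
    obtain ⟨v, hv⟩ := Function.ne_iff.mp hw0
    exact sum_pos' (fun u _ => mul_nonneg (abs_nonneg _) (hx u).le)
      ⟨v, mem_univ _, mul_pos (abs_pos.mpr hv) (hx v)⟩
  refine le_of_mul_le_mul_right ?_ hpos
  calc |μ| * (|w| ⬝ᵥ x) = ∑ v, |μ| * |w v| * x v := by
        simp only [dotProduct, mul_sum, mul_assoc, Pi.abs_apply]
    _ ≤ ∑ v, (G.adjMatrix ℝ *ᵥ |w|) v * x v :=
        sum_le_sum fun v _ => mul_le_mul_of_nonneg_right (hpt v) (hx v).le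
    _ = r * (|w| ⬝ᵥ x) := by
        rw [← dotProduct, ← transpose_adjMatrix, mulVec_transpose, ← dotProduct_mulVec, h,
          dotProduct_smul, smul_eq_mul]

theorem specRad_eq_of_pos_eigenvector [Nonempty V] {x : V → ℝ} {r : ℝ} (hx : ∀ v, 0 < x v)
    (h : G.adjMatrix ℝ *ᵥ x = r • x) : specRad G = r := by
  classical
  obtain ⟨v⟩ := ‹Nonempty V›
  have hr := mem_spectrum_of_mulVec_eq_smul (fun h0 => (hx v).ne' (congrFun h0 v)) h
  have hle : ∀ μ ∈ spectrum ℝ (G.adjMatrix ℝ), μ ≤ r := fun μ hμ =>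
    (le_abs_self μ).trans (abs_le_of_mem_spectrum_of_pos_eigenvector hx h hμ)
  rw [specRad_eq_sSup]
  exact le_antisymm (csSup_le ⟨r, hr⟩ hle) (le_csSup ⟨r, hle⟩ hr)

theorem adjMatrix_mulVec_apply_of_subset_neighborFinset {v : V} {T : Finset V}
    (hT : T ⊆ G.neighborFinset v) {x : V → ℝ} {c d : ℝ} (hc : ∀ u ∈ T, x u = c)
    (hd : ∀ u ∈ G.neighborFinset v, u ∉ T → x u = d) :
    (G.adjMatrix ℝ *ᵥ x) v = c * #T + d * (G.degree v - #T) := by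
  classical
  rw [adjMatrix_mulVec_apply, ← sum_sdiff hT, sum_congr rfl hc,
    sum_congr rfl fun u hu => hd u (mem_sdiff.mp hu).1 (mem_sdiff.mp hu).2, sum_const, sum_const,
    card_sdiff_of_subset hT, card_neighborFinset_eq_degree, nsmul_eq_mul, nsmul_eq_mul,
    Nat.cast_sub (card_neighborFinset_eq_degree G v ▸ card_le_card hT)]
  ring

end Spectral

section Bipartite

variable {α β : Type*} [Fintype α] [Fintype β] {G : SimpleGraph (α ⊕ β)} [DecidableRel G.Adj]

theorem neighborFinset_inl_subset (hL : ∀ i i', ¬ G.Adj (.inl i) (.inl i')) (i : α) :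
    G.neighborFinset (.inl i) ⊆ univ.map .inr := by
  rintro (i' | j) hu
  · exact absurd ((mem_neighborFinset _ _ _).mp hu) (hL i i')
  · simp

theorem neighborFinset_inr_subset (hR : ∀ j j', ¬ G.Adj (.inr j) (.inr j')) (j : β) :
    G.neighborFinset (.inr j) ⊆ univ.map .inl := by
  rintro (i | j') hu
  · simp
  · exact absurd ((mem_neighborFinset _ _ _).mp hu) (hR j j')

theorem map_inr_subset_neighborFinset_inl {i : α} {T : Finset β}
    (h : ∀ j ∈ T, G.Adj (.inl i) (.inr j)) : T.map .inr ⊆ G.neighborFinset (.inl i) := by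
  simpa [subset_iff] using h

theorem map_inl_subset_neighborFinset_inr {j : β} {S : Finset α}
    (h : ∀ i ∈ S, G.Adj (.inl i) (.inr j)) : S.map .inl ⊆ G.neighborFinset (.inr j) := by
  simpa [subset_iff, adj_comm] using h

theorem degree_inl_le (hL : ∀ i i', ¬ G.Adj (.inl i) (.inl i')) (i : α) :
    G.degree (.inl i) ≤ Fintype.card β := by
  simpa using card_le_card (neighborFinset_inl_subset hL i)

theorem degree_inr_le (hR : ∀ j j', ¬ G.Adj (.inr j) (.inr j')) (j : β) :
    G.degree (.inr j) ≤ Fintype.card α := by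
  simpa using card_le_card (neighborFinset_inr_subset hR j)

theorem card_le_degree_inl {i : α} {T : Finset β} (h : ∀ j ∈ T, G.Adj (.inl i) (.inr j)) :
    #T ≤ G.degree (.inl i) := by
  simpa using card_le_card (map_inr_subset_neighborFinset_inl h)

theorem card_le_degree_inr {j : β} {S : Finset α} (h : ∀ i ∈ S, G.Adj (.inl i) (.inr j)) :
    #S ≤ G.degree (.inr j) := by
  simpa using card_le_card (map_inl_subset_neighborFinset_inr h)

theorem card_lt_degree_inl {i : α} {T : Finset β} (h : ∀ j ∈ T, G.Adj (.inl i) (.inr j))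
    {j : β} (hj : j ∉ T) (hij : G.Adj (.inl i) (.inr j)) : #T < G.degree (.inl i) := by
  rw [← card_map .inr, ← card_neighborFinset_eq_degree]
  exact card_lt_card ((ssubset_iff_of_subset (map_inr_subset_neighborFinset_inl h)).mpr
    ⟨.inr j, by simpa using hij, by simpa using hj⟩)

theorem degree_inl_eq_card (hL : ∀ i i', ¬ G.Adj (.inl i) (.inl i')) {i : α}
    (h : ∀ j, G.Adj (.inl i) (.inr j)) : G.degree (.inl i) = Fintype.card β :=
  (degree_inl_le hL i).antisymm (card_le_degree_inl (T := univ) fun j _ => h j)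

theorem degree_inr_eq_card (hR : ∀ j j', ¬ G.Adj (.inr j) (.inr j')) {j : β}
    (h : ∀ i, G.Adj (.inl i) (.inr j)) : G.degree (.inr j) = Fintype.card α :=
  (degree_inr_le hR j).antisymm (card_le_degree_inr (S := univ) fun i _ => h i)

theorem adjMatrix_mulVec_inl (hL : ∀ i i', ¬ G.Adj (.inl i) (.inl i')) {i : α} {T : Finset β}
    (h : ∀ j ∈ T, G.Adj (.inl i) (.inr j)) {x : α ⊕ β → ℝ} {c d : ℝ}
    (hc : ∀ j ∈ T, x (.inr j) = c) (hd : ∀ j ∉ T, x (.inr j) = d) :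
    (G.adjMatrix ℝ *ᵥ x) (.inl i) = c * #T + d * (G.degree (.inl i) - #T) := by
  rw [← card_map .inr]
  refine adjMatrix_mulVec_apply_of_subset_neighborFinset
    (map_inr_subset_neighborFinset_inl h) (by simpa using hc) fun u hu huT => ?_
  obtain ⟨j, -, rfl⟩ := mem_map.mp (neighborFinset_inl_subset hL i hu)
  exact hd j (by simpa using huT)

theorem adjMatrix_mulVec_inr (hR : ∀ j j', ¬ G.Adj (.inr j) (.inr j')) {j : β} {S : Finset α}
    (h : ∀ i ∈ S, G.Adj (.inl i) (.inr j)) {x : α ⊕ β → ℝ} {a b : ℝ}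
    (ha : ∀ i ∈ S, x (.inl i) = a) (hb : ∀ i ∉ S, x (.inl i) = b) :
    (G.adjMatrix ℝ *ᵥ x) (.inr j) = a * #S + b * (G.degree (.inr j) - #S) := by
  rw [← card_map .inl]
  refine adjMatrix_mulVec_apply_of_subset_neighborFinset
    (map_inl_subset_neighborFinset_inr h) (by simpa using ha) fun u hu huS => ?_
  obtain ⟨i, -, rfl⟩ := mem_map.mp (neighborFinset_inr_subset hR j hu)
  exact hb i (by simpa using huS)

theorem adjMatrix_mulVec_sumElim_ite_eq_smul [DecidableEq α] [DecidableEq β]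
    (hL : ∀ i i', ¬ G.Adj (.inl i) (.inl i')) (hR : ∀ j j', ¬ G.Adj (.inr j) (.inr j'))
    {S : Finset α} {T : Finset β} (hfull : ∀ i j, i ∈ S ∨ j ∈ T → G.Adj (.inl i) (.inr j))
    {D E : ℕ} (hD : ∀ i ∉ S, G.degree (.inl i) = D) (hE : ∀ j ∉ T, G.degree (.inr j) = E)
    {φ a b c d : ℝ} (ha : φ * a = c * #T + d * (Fintype.card β - #T))
    (hb : φ * b = c * #T + d * (D - #T)) (hc : φ * c = a * #S + b * (Fintype.card α - #S))
    (hd : φ * d = a * #S + b * (E - #S)) :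
    G.adjMatrix ℝ *ᵥ Sum.elim (fun i => if i ∈ S then a else b) (fun j => if j ∈ T then c else d)
      = φ • Sum.elim (fun i => if i ∈ S then a else b) (fun j => if j ∈ T then c else d) := by
  funext v
  rcases v with i | j
  · rw [adjMatrix_mulVec_inl hL (fun j hj => hfull i j (.inr hj)) (c := c) (d := d)
      (by simp_all) (by simp_all)]
    by_cases hi : i ∈ S
    · simp [hi, degree_inl_eq_card hL (fun j => hfull i j (.inl hi)), ha]
    · simp [hi, hD i hi, hb]
  · rw [adjMatrix_mulVec_inr hR (fun i hi => hfull i j (.inl hi)) (a := a) (b := b)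
      (by simp_all) (by simp_all)]
    by_cases hj : j ∈ T
    · simp [hj, degree_inr_eq_card hR (fun i => hfull i j (.inr hj)), hc]
    · simp [hj, hE j hj, hd]

theorem specRad_eq_of_bipartiteSum_biregular [DecidableEq α] [DecidableEq β]
    (hconn : G.Connected) (hL : ∀ i i', ¬ G.Adj (.inl i) (.inl i'))
    (hR : ∀ j j', ¬ G.Adj (.inr j) (.inr j')) {S : Finset α} {T : Finset β}
    (hfull : ∀ i j, i ∈ S ∨ j ∈ T → G.Adj (.inl i) (.inr j)) {i₀ : α} {j₀ : β}
    (hj₀ : j₀ ∉ T) (hD : ∀ i ∉ S, G.degree (.inl i) = G.degree (.inl i₀))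
    (hE : ∀ j ∉ T, G.degree (.inr j) = G.degree (.inr j₀)) {X Y : ℝ}
    (hX : X = G.degree (.inl i₀) * G.degree (.inr j₀) + #S * (Fintype.card β - G.degree (.inl i₀))
      + #T * (Fintype.card α - G.degree (.inr j₀)))
    (hY : Y = #S * (Fintype.card β - G.degree (.inl i₀))
      * (#T * (Fintype.card α - G.degree (.inr j₀)))) :
    specRad G = √((X + √(X ^ 2 - 4 * Y)) / 2) := by
  have hDpos : 0 < G.degree (.inl i₀) :=
    (hconn.preconnected (.inl i₀) (.inr j₀)).degree_pos_left Sum.inl_ne_inr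
  have hEpos : 0 < G.degree (.inr j₀) :=
    (hconn.preconnected (.inl i₀) (.inr j₀)).degree_pos_right Sum.inl_ne_inr
  have hsD : 0 < #S ∨ #T < G.degree (.inl i₀) := by
    refine (Nat.eq_zero_or_pos #S).symm.imp_right fun hS => ?_
    obtain ⟨i | j, hadj⟩ := (G.degree_pos_iff_exists_adj _).mp hEpos
    · rw [← hD i (by simp [card_eq_zero.mp hS])]
      exact card_lt_degree_inl (fun j hj => hfull i j (.inr hj)) hj₀ hadj.symm
    · exact absurd hadj (hR j₀ j)
  obtain ⟨a, b, c, d, ha0, hb0, hc0, hd0, ha, hb, hc, hd⟩ :=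
    exists_pos_quotient_eigenvector (Nat.cast_nonneg _) (Nat.cast_nonneg _)
      (Nat.cast_lt.mpr (card_lt_univ_of_notMem hj₀))
      (Nat.cast_le.mpr (card_le_degree_inl fun j hj => hfull i₀ j (.inr hj)))
      (Nat.cast_le.mpr (degree_inl_le hL i₀))
      (Nat.cast_le.mpr (card_le_degree_inr fun i hi => hfull i j₀ (.inl hi)))
      (Nat.cast_le.mpr (degree_inr_le hR j₀)) (Nat.cast_pos.mpr hDpos) (Nat.cast_pos.mpr hEpos)
      (by exact_mod_cast hsD) hX hY
  have : Nonempty (α ⊕ β) := ⟨.inl i₀⟩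
  refine specRad_eq_of_pos_eigenvector ?_
    (adjMatrix_mulVec_sumElim_ite_eq_smul hL hR hfull hD hE ha hb hc hd)
  rintro (i | j) <;> dsimp only [Sum.elim_inl, Sum.elim_inr] <;> split_ifs <;> assumption

end Bipartite

end SimpleGraph

open SimpleGraph

-- `s` and `t` are 0-based indices, so the paper's `s' < s`, `t' < t` read `s' ≤ s`, `t' ≤ t`.
theorem stmt3_general (p q : ℕ) (G : SimpleGraph (Fin p ⊕ Fin q)) [DecidableRel G.Adj]
    (hconn : G.Connected)
    (hL : ∀ i j : Fin p, ¬ G.Adj (Sum.inl i) (Sum.inl j))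
    (hR : ∀ i j : Fin q, ¬ G.Adj (Sum.inr i) (Sum.inr j))
    (s : Fin p) (t : Fin q) (X Y : ℝ)
    (hX : X = (G.degree (Sum.inl s) : ℝ) * (G.degree (Sum.inr t) : ℝ)
      + ∑ i ∈ Finset.univ.filter (fun i : Fin p => i < s),
          ((G.degree (Sum.inl i) : ℝ) - (G.degree (Sum.inl s) : ℝ))
      + ∑ j ∈ Finset.univ.filter (fun j : Fin q => j < t),
          ((G.degree (Sum.inr j) : ℝ) - (G.degree (Sum.inr t) : ℝ)))
    (hY : Y = (∑ i ∈ Finset.univ.filter (fun i : Fin p => i < s),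
          ((G.degree (Sum.inl i) : ℝ) - (G.degree (Sum.inl s) : ℝ)))
      * (∑ j ∈ Finset.univ.filter (fun j : Fin q => j < t),
          ((G.degree (Sum.inr j) : ℝ) - (G.degree (Sum.inr t) : ℝ))))
    (s' t' : ℕ) (hs' : s' ≤ s.val) (ht' : t' ≤ t.val)
    (hfull : ∀ (i : Fin p) (j : Fin q), i.val < s' ∨ j.val < t' →
      G.Adj (Sum.inl i) (Sum.inr j))
    (hbiregL : ∀ i i' : Fin p, s' ≤ i.val → s' ≤ i'.val →
      G.degree (Sum.inl i) = G.degree (Sum.inl i'))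
    (hbiregR : ∀ j j' : Fin q, t' ≤ j.val → t' ≤ j'.val →
      G.degree (Sum.inr j) = G.degree (Sum.inr j')) :
    specRad G = Real.sqrt ((X + Real.sqrt (X^2 - 4*Y)) / 2) := by
  set S := univ.filter (fun i : Fin p => (i : ℕ) < s')
  set T := univ.filter (fun j : Fin q => (j : ℕ) < t')
  have hS : #S = s' := by rw [Fin.card_filter_val_lt, min_eq_right (hs'.trans s.isLt.le)]
  have hT : #T = t' := by rw [Fin.card_filter_val_lt, min_eq_right (ht'.trans t.isLt.le)]
  have hsumL := Fin.sum_filter_lt_eq_of_eqOn hs' (c := (q : ℝ) - G.degree (.inl s))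
    (f := fun i => (G.degree (.inl i) : ℝ) - G.degree (.inl s))
    (fun i hi => by simp [degree_inl_eq_card hL fun j => hfull i j (.inl hi)])
    (fun i hi => by simp [hbiregL i s hi hs'])
  have hsumR := Fin.sum_filter_lt_eq_of_eqOn ht' (c := (p : ℝ) - G.degree (.inr t))
    (f := fun j => (G.degree (.inr j) : ℝ) - G.degree (.inr t))
    (fun j hj => by simp [degree_inr_eq_card hR fun i => hfull i j (.inr hj)])
    (fun j hj => by simp [hbiregR j t hj ht'])
  refine specRad_eq_of_bipartiteSum_biregular hconn hL hR (S := S) (T := T)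
    (by simpa [S, T] using hfull) (i₀ := s) (j₀ := t) (by simpa [T] using ht')
    (fun i hi => hbiregL i s (by simpa [S] using hi) hs')
    (fun j hj => hbiregR j t (by simpa [T] using hj) ht') ?_ ?_
  · rw [hX, hsumL, hsumR, hS, hT, Fintype.card_fin, Fintype.card_fin]
  · rw [hY, hsumL, hsumR, hS, hT, Fintype.card_fin, Fintype.card_fin]

/-- If a connected bipartite graph `G` (vertices ordered by nonincreasing degrees on each side)
is the bipartite sum `K_{s',t'} + H` of a complete bipartite graph `K_{s',t'}` (the first `s'`
left and first `t'` right vertices, joined to everything on the other side) and a biregular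
bipartite graph `H` (the induced graph on the remaining `p - s'` left and `q - t'` right
vertices, having constant degrees on each side), with `s' < s` and `t' < t` (here `s`, `t` are
0-based indices, so the paper's 1-based conditions `s' < s`, `t' < t` read `s' ≤ s`, `t' ≤ t`),
then `ρ(G) = φ_{s,t}`. -/
theorem stmt3 (p q : ℕ) (G : SimpleGraph (Fin p ⊕ Fin q)) [DecidableRel G.Adj]
    (hconn : G.Connected)
    (hL : ∀ i j : Fin p, ¬ G.Adj (Sum.inl i) (Sum.inl j))
    (hR : ∀ i j : Fin q, ¬ G.Adj (Sum.inr i) (Sum.inr j))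
    (hdU : ∀ i j : Fin p, i ≤ j → G.degree (Sum.inl j) ≤ G.degree (Sum.inl i))
    (hdV : ∀ i j : Fin q, i ≤ j → G.degree (Sum.inr j) ≤ G.degree (Sum.inr i))
    (s : Fin p) (t : Fin q) (X Y : ℝ)
    (hX : X = (G.degree (Sum.inl s) : ℝ) * (G.degree (Sum.inr t) : ℝ)
      + ∑ i ∈ Finset.univ.filter (fun i : Fin p => i < s),
          ((G.degree (Sum.inl i) : ℝ) - (G.degree (Sum.inl s) : ℝ))
      + ∑ j ∈ Finset.univ.filter (fun j : Fin q => j < t),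
          ((G.degree (Sum.inr j) : ℝ) - (G.degree (Sum.inr t) : ℝ)))
    (hY : Y = (∑ i ∈ Finset.univ.filter (fun i : Fin p => i < s),
          ((G.degree (Sum.inl i) : ℝ) - (G.degree (Sum.inl s) : ℝ)))
      * (∑ j ∈ Finset.univ.filter (fun j : Fin q => j < t),
          ((G.degree (Sum.inr j) : ℝ) - (G.degree (Sum.inr t) : ℝ))))
    (s' t' : ℕ) (hs' : s' ≤ s.val) (ht' : t' ≤ t.val)
    (hfull : ∀ (i : Fin p) (j : Fin q), i.val < s' ∨ j.val < t' →
      G.Adj (Sum.inl i) (Sum.inr j))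
    (hbiregL : ∀ i i' : Fin p, s' ≤ i.val → s' ≤ i'.val →
      G.degree (Sum.inl i) = G.degree (Sum.inl i'))
    (hbiregR : ∀ j j' : Fin q, t' ≤ j.val → t' ≤ j'.val →
      G.degree (Sum.inr j) = G.degree (Sum.inr j')) :
    specRad G = Real.sqrt ((X + Real.sqrt (X^2 - 4*Y)) / 2) :=
  stmt3_general p q G hconn hL hR s t X Y hX hY s' t' hs' ht' hfull hbiregL hbiregR
end

section
/- Let G be a connected simple bipartite graph with bipartition (U,V), |U| = p, |V| = q, and degree sequences d_1 ≥ ... ≥ d_p on U and d'_1 ≥ ... ≥ d'_q on V, and let 1 ≤ s ≤ p, 1 ≤ t ≤ q. If ρ(G) = φ_{s,t}, then there exist nonnegative integers s' < s and t' < t and a biregular bipartite graph H with bipartition orders p − s' and q − t' such that G is the bipartite sum K_{s',t'} + H. -/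
open Finset Matrix

section aux
lemma initseg {n : ℕ} (S : Finset (Fin n))
    (hdc : ∀ i j : Fin n, i ≤ j → j ∈ S → i ∈ S) (i : Fin n) :
    i ∈ S ↔ i.val < S.card := by
  constructor
  · intro hi
    have hsub : Finset.Iic i ⊆ S := fun k hk => hdc k i (Finset.mem_Iic.mp hk) hi
    have := Finset.card_le_card hsub
    rw [Fin.card_Iic] at this
    omega
  · intro hi
    by_contra hns
    have hsub : S ⊆ Finset.Iio i := by
      intro k hk
      rw [Finset.mem_Iio]
      by_contra hk2
      exact hns (hdc i k (le_of_not_gt hk2) hk)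
    have := Finset.card_le_card hsub
    rw [Fin.card_Iio] at this
    omega

lemma pos_on_walk {V : Type*} [Fintype V] (G : SimpleGraph V) [DecidableRel G.Adj]
    (z : V → ℝ) (hnn : ∀ k, 0 ≤ z k) (ρ : ℝ)
    (he : ∀ k, ∑ m ∈ G.neighborFinset k, z m = ρ * z k)
    {a b : V} (w : G.Walk a b) (ha : 0 < z a) : 0 < z b := by
  induction w with
  | nil => exact ha
  | @cons x y bb hadj p ih =>
    apply ih
    by_contra hy
    have hy0 : z y = 0 := le_antisymm (le_of_not_gt hy) (hnn y)
    have hsum : ∑ m ∈ G.neighborFinset y, z m = 0 := by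
      rw [he y, hy0, mul_zero]
    have hxmem : x ∈ G.neighborFinset y := by
      rw [SimpleGraph.mem_neighborFinset]
      exact hadj.symm
    have hzero : z x = 0 := by
      have := (Finset.sum_eq_zero_iff_of_nonneg (fun m _ => hnn m)).mp hsum x hxmem
      exact this
    rw [hzero] at ha
    exact lt_irrefl 0 ha

lemma exists_top_eigvec {n : Type*} [Fintype n] [DecidableEq n] [Nonempty n]
    (A : Matrix n n ℝ) (hA : A.IsHermitian) :
    ∃ z : n → ℝ, z ≠ 0 ∧ A.mulVec z = sSup (spectrum ℝ A) • z := by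
  have hfin : (spectrum ℝ A).Finite := A.finite_spectrum
  have hne : (spectrum ℝ A).Nonempty :=
    ⟨hA.eigenvalues (Classical.arbitrary n), hA.eigenvalues_mem_spectrum_real _⟩
  have hmem : sSup (spectrum ℝ A) ∈ spectrum ℝ A := hne.csSup_mem hfin
  have hlin : (Matrix.toLinAlgEquiv' A : (n → ℝ) →ₗ[ℝ] (n → ℝ)) = Matrix.toLin' A := by
    ext v
    simp [Matrix.toLinAlgEquiv'_apply, Matrix.toLin'_apply]
  have hev : Module.End.HasEigenvalue (Matrix.toLin' A) (sSup (spectrum ℝ A)) := by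
    rw [Module.End.hasEigenvalue_iff_mem_spectrum, ← hlin,
      AlgEquiv.spectrum_eq (Matrix.toLinAlgEquiv' : Matrix n n ℝ ≃ₐ[ℝ] _)]
    exact hmem
  obtain ⟨z, hz, hz0⟩ := hev.exists_hasEigenvector
  refine ⟨z, hz0, ?_⟩
  have := Module.End.mem_eigenspace_iff.mp hz
  rwa [Matrix.toLin'_apply] at this
end aux

set_option maxHeartbeats 1000000 in
/-- If a connected bipartite graph `G` (vertices ordered by nonincreasing degrees on each side)
satisfies `ρ(G) = φ_{s,t}`, then `G` is the bipartite sum `K_{s',t'} + H` for some `s' < s`,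
`t' < t` (0-based indices `s`, `t`, so the paper's 1-based conditions read `s' ≤ s`, `t' ≤ t`)
and some biregular bipartite graph `H` with bipartition orders `p - s'` and `q - t'`:
the first `s'` left and first `t'` right vertices are joined to all vertices on the other
side, and the induced graph on the remaining vertices has constant degrees on each side. -/
theorem stmt4 (p q : ℕ) (G : SimpleGraph (Fin p ⊕ Fin q)) [DecidableRel G.Adj]
    (hconn : G.Connected)
    (hL : ∀ i j : Fin p, ¬ G.Adj (Sum.inl i) (Sum.inl j))
    (hR : ∀ i j : Fin q, ¬ G.Adj (Sum.inr i) (Sum.inr j))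
    (hdU : ∀ i j : Fin p, i ≤ j → G.degree (Sum.inl j) ≤ G.degree (Sum.inl i))
    (hdV : ∀ i j : Fin q, i ≤ j → G.degree (Sum.inr j) ≤ G.degree (Sum.inr i))
    (s : Fin p) (t : Fin q) (X Y : ℝ)
    (hX : X = (G.degree (Sum.inl s) : ℝ) * (G.degree (Sum.inr t) : ℝ)
      + ∑ i ∈ Finset.univ.filter (fun i : Fin p => i < s),
          ((G.degree (Sum.inl i) : ℝ) - (G.degree (Sum.inl s) : ℝ))
      + ∑ j ∈ Finset.univ.filter (fun j : Fin q => j < t),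
          ((G.degree (Sum.inr j) : ℝ) - (G.degree (Sum.inr t) : ℝ)))
    (hY : Y = (∑ i ∈ Finset.univ.filter (fun i : Fin p => i < s),
          ((G.degree (Sum.inl i) : ℝ) - (G.degree (Sum.inl s) : ℝ)))
      * (∑ j ∈ Finset.univ.filter (fun j : Fin q => j < t),
          ((G.degree (Sum.inr j) : ℝ) - (G.degree (Sum.inr t) : ℝ))))
    (heq : specRad G = Real.sqrt ((X + Real.sqrt (X^2 - 4*Y)) / 2)) :
    ∃ s' t' : ℕ, s' ≤ s.val ∧ t' ≤ t.val ∧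
      (∀ (i : Fin p) (j : Fin q), i.val < s' ∨ j.val < t' →
        G.Adj (Sum.inl i) (Sum.inr j)) ∧
      (∀ i i' : Fin p, s' ≤ i.val → s' ≤ i'.val →
        G.degree (Sum.inl i) = G.degree (Sum.inl i')) ∧
      (∀ j j' : Fin q, t' ≤ j.val → t' ≤ j'.val →
        G.degree (Sum.inr j) = G.degree (Sum.inr j')) := by
  classical
  -- abbreviations
  set NR : Fin p → Finset (Fin q) :=
    fun i => Finset.univ.filter (fun j => G.Adj (Sum.inl i) (Sum.inr j)) with hNR
  set NL : Fin q → Finset (Fin p) :=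
    fun j => Finset.univ.filter (fun i => G.Adj (Sum.inl i) (Sum.inr j)) with hNL
  -- neighbor finset identification
  have hnbhdL : ∀ i : Fin p,
      G.neighborFinset (Sum.inl i) = (NR i).map ⟨Sum.inr, Sum.inr_injective⟩ := by
    intro i
    ext w
    cases w with
    | inl a => simp [SimpleGraph.mem_neighborFinset, hL i a]
    | inr b => simp [SimpleGraph.mem_neighborFinset, hNR]
  have hnbhdR : ∀ j : Fin q,
      G.neighborFinset (Sum.inr j) = (NL j).map ⟨Sum.inl, Sum.inl_injective⟩ := by
    intro j
    ext w
    cases w with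
    | inl a => simp [SimpleGraph.mem_neighborFinset, hNL, G.adj_comm]
    | inr b => simp [SimpleGraph.mem_neighborFinset, hR j b]
  have hdegL : ∀ i : Fin p, (G.degree (Sum.inl i) : ℝ) = ((NR i).card : ℝ) := by
    intro i
    rw [← SimpleGraph.card_neighborFinset_eq_degree, hnbhdL i, Finset.card_map]
  have hdegR : ∀ j : Fin q, (G.degree (Sum.inr j) : ℝ) = ((NL j).card : ℝ) := by
    intro j
    rw [← SimpleGraph.card_neighborFinset_eq_degree, hnbhdR j, Finset.card_map]
  have hnbrR : ∀ j : Fin q, (NL j).Nonempty := by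
    intro j
    obtain ⟨wk⟩ := hconn.preconnected (Sum.inr j) (Sum.inl s)
    cases wk with
    | @cons _ x _ h pp =>
      cases x with
      | inl i =>
        exact ⟨i, by simp [hNL, h.symm]⟩
      | inr b => exact absurd h (hR j b)
  have hnbrL : ∀ i : Fin p, (NR i).Nonempty := by
    intro i
    obtain ⟨wk⟩ := hconn.preconnected (Sum.inl i) (Sum.inr t)
    cases wk with
    | @cons _ x _ h pp =>
      cases x with
      | inl a => exact absurd h (hL i a)
      | inr j =>
        exact ⟨j, by simp [hNR, h]⟩
  -- algebra setup
  subst hX hY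
  set a : ℝ := (G.degree (Sum.inl s) : ℝ) with ha
  set b : ℝ := (G.degree (Sum.inr t) : ℝ) with hb
  set SD : ℝ := ∑ i ∈ Finset.univ.filter (fun i : Fin p => i < s),
      ((G.degree (Sum.inl i) : ℝ) - a) with hSD
  set TD : ℝ := ∑ j ∈ Finset.univ.filter (fun j : Fin q => j < t),
      ((G.degree (Sum.inr j) : ℝ) - b) with hTD
  have hds1 : (1:ℝ) ≤ a := by
    rw [ha, hdegL s]
    exact_mod_cast (hnbrL s).card_pos
  have hdt1 : (1:ℝ) ≤ b := by
    rw [hb, hdegR t]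
    exact_mod_cast (hnbrR t).card_pos
  have hSD0 : 0 ≤ SD := by
    rw [hSD]
    apply Finset.sum_nonneg
    intro i hi
    rw [Finset.mem_filter] at hi
    have := hdU i s (le_of_lt hi.2)
    rw [ha]
    simp only [sub_nonneg]
    exact_mod_cast this
  have hTD0 : 0 ≤ TD := by
    rw [hTD]
    apply Finset.sum_nonneg
    intro j hj
    rw [Finset.mem_filter] at hj
    have := hdV j t (le_of_lt hj.2)
    rw [hb]
    simp only [sub_nonneg]
    exact_mod_cast this
  have hab1 : (1:ℝ) ≤ a * b := by nlinarith
  have hD0 : 0 ≤ (a * b + SD + TD)^2 - 4*(SD*TD) := by nlinarith [sq_nonneg (SD - TD)]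
  set D : ℝ := Real.sqrt ((a * b + SD + TD)^2 - 4*(SD*TD)) with hD
  have hD2 : D^2 = (a * b + SD + TD)^2 - 4*(SD*TD) := Real.sq_sqrt hD0
  have hDnn : 0 ≤ D := Real.sqrt_nonneg _
  set lam : ℝ := (a * b + SD + TD + D)/2 with hlam
  have hq : lam^2 - (a * b + SD + TD)*lam + SD*TD = 0 := by
    rw [hlam]; linear_combination hD2/4
  have hlam_pos : 0 < lam := by rw [hlam]; nlinarith
  have hXle : a * b + SD + TD ≤ 2*lam := by rw [hlam]; linarith
  have hlamSd : SD < lam := by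
    by_contra hcon
    push_neg at hcon
    have h1 : 1 + TD ≤ lam := by nlinarith
    nlinarith [hq, mul_nonneg (sub_nonneg.mpr hcon) (by linarith : (0:ℝ) ≤ lam - TD)]
  have hlamSdne : lam - SD ≠ 0 := ne_of_gt (by linarith)
  set gam : ℝ := b / (lam - SD) with hgam
  have hgam_pos : 0 < gam := by
    rw [hgam]; exact div_pos (by linarith) (by linarith)
  have hglam : gam * (lam - SD) = b := by
    rw [hgam]; field_simp
  have key2 : lam = a * (gam*SD + b) + TD := by
    have E : (lam - a*(gam*SD + b) - TD) * (lam - SD) = 0 := by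
      linear_combination hq - (a*SD) * hglam
    rcases mul_eq_zero.mp E with h | h
    · linarith
    · exact absurd h hlamSdne
  have ALG : ∀ r : ℝ, lam * (1 + gam*(r - a)) = r*(gam*SD + b) + TD := by
    intro r
    linear_combination (r - a) * hglam + key2
  -- test vector pieces
  set e : Fin p → ℝ := fun i => if i < s then (G.degree (Sum.inl i) : ℝ) - a else 0 with hedef
  have he0 : ∀ i, 0 ≤ e i := by
    intro i
    rw [hedef]
    dsimp only
    split
    · rename_i hi
      have := hdU i s (le_of_lt hi)
      rw [ha]; simp only [sub_nonneg]; exact_mod_cast this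
    · exact le_refl 0
  have hSDe : SD = ∑ i, e i := by
    rw [hSD, Finset.sum_filter]
  have heup : ∀ (M : Finset (Fin p)), ∑ i ∈ M, e i ≤ SD := by
    intro M
    rw [hSDe]
    exact Finset.sum_le_sum_of_subset_of_nonneg (Finset.subset_univ M)
      (fun i _ _ => he0 i)
  set f : Fin q → ℝ := fun j => if j < t then (G.degree (Sum.inr j) : ℝ) - b else 0 with hfdef
  have hf0 : ∀ j, 0 ≤ f j := by
    intro j
    rw [hfdef]
    dsimp only
    split
    · rename_i hj
      have := hdV j t (le_of_lt hj)
      rw [hb]; simp only [sub_nonneg]; exact_mod_cast this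
    · exact le_refl 0
  have hTDf : TD = ∑ j, f j := by
    rw [hTD, Finset.sum_filter]
  have hfup : ∀ (M : Finset (Fin q)), ∑ j ∈ M, f j ≤ TD := by
    intro M
    rw [hTDf]
    exact Finset.sum_le_sum_of_subset_of_nonneg (Finset.subset_univ M)
      (fun j _ _ => hf0 j)
  have hfge : ∀ j, (G.degree (Sum.inr j) : ℝ) - b ≤ f j := by
    intro j
    rw [hfdef]
    dsimp only
    split
    · exact le_refl _
    · rename_i hj
      have := hdV t j (le_of_not_gt hj)
      rw [hb]; simp only [sub_nonpos]; exact_mod_cast this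
  set u : Fin p → ℝ := fun i => 1 + gam * e i with hudef
  have hu_pos : ∀ i, 0 < u i := by
    intro i
    rw [hudef]
    dsimp only
    nlinarith [he0 i, hgam_pos]
  have hu1 : ∀ i, ¬(i < s) → u i = 1 := by
    intro i hi
    rw [hudef]
    dsimp only
    rw [hedef]
    simp [hi]
  have SUMJ : ∀ j, ∑ i' ∈ NL j, u i'
      = (G.degree (Sum.inr j) : ℝ) + gam * ∑ i' ∈ NL j, e i' := by
    intro j
    rw [hdegR j, hudef]
    dsimp only
    simp only [Finset.sum_add_distrib, Finset.sum_const, nsmul_eq_mul, mul_one,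
      ← Finset.mul_sum]
  have DECOMP : ∀ i, lam * u i - ∑ j ∈ NR i, (∑ i' ∈ NL j, u i')
      = (∑ j ∈ NR i, gam*(SD - ∑ i' ∈ NL j, e i'))
      + (∑ j ∈ NR i, (f j - ((G.degree (Sum.inr j) : ℝ) - b)))
      + (TD - ∑ j ∈ NR i, f j)
      + (lam * u i - ((G.degree (Sum.inl i) : ℝ) * (gam*SD + b) + TD)) := by
    intro i
    have h1 : ∑ j ∈ NR i, (∑ i' ∈ NL j, u i')
        = ∑ j ∈ NR i, ((G.degree (Sum.inr j) : ℝ) + gam * ∑ i' ∈ NL j, e i') :=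
      Finset.sum_congr rfl (fun j _ => SUMJ j)
    rw [h1, hdegL i]
    simp only [Finset.sum_add_distrib, Finset.sum_sub_distrib, ← Finset.mul_sum,
      Finset.sum_const, nsmul_eq_mul]
    ring
  have hs1 : ∀ i, 0 ≤ ∑ j ∈ NR i, gam*(SD - ∑ i' ∈ NL j, e i') := by
    intro i
    apply Finset.sum_nonneg
    intro j _
    have := heup (NL j)
    nlinarith [hgam_pos]
  have hs2 : ∀ i, 0 ≤ ∑ j ∈ NR i, (f j - ((G.degree (Sum.inr j) : ℝ) - b)) := by
    intro i
    apply Finset.sum_nonneg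
    intro j _
    linarith [hfge j]
  have hs3 : ∀ i, 0 ≤ TD - ∑ j ∈ NR i, f j := by
    intro i
    linarith [hfup (NR i)]
  have hdege : ∀ i : Fin p, (G.degree (Sum.inl i) : ℝ) = a + (e i - (if i < s then 0 else a - (G.degree (Sum.inl i) : ℝ))) := by
    intro i
    rw [hedef]
    dsimp only
    split <;> ring
  have hs4 : ∀ i, 0 ≤ lam * u i - ((G.degree (Sum.inl i) : ℝ) * (gam*SD + b) + TD) := by
    intro i
    by_cases hi : i < s
    · have halg := ALG ((G.degree (Sum.inl i) : ℝ))
      have hei : e i = (G.degree (Sum.inl i) : ℝ) - a := by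
        rw [hedef]; dsimp only; rw [if_pos hi]
      rw [hudef]
      dsimp only
      rw [hei]
      linarith [halg]
    · rw [hu1 i hi, mul_one]
      have hdia : (G.degree (Sum.inl i) : ℝ) ≤ a := by
        rw [ha]
        exact_mod_cast hdU s i (le_of_not_gt hi)
      have hgb : 0 < gam*SD + b := by nlinarith [hgam_pos, hSD0]
      nlinarith [key2, hgb, hdia]
  -- spectral part
  haveI : Nonempty (Fin p ⊕ Fin q) := ⟨Sum.inl s⟩
  set A : Matrix (Fin p ⊕ Fin q) (Fin p ⊕ Fin q) ℝ := G.adjMatrix ℝ with hA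
  have hAherm : A.IsHermitian := by
    have : Aᴴ = A := by
      ext k m
      rw [hA]
      simp [Matrix.conjTranspose_apply, SimpleGraph.adjMatrix_apply, G.adj_comm]
    exact this
  have hspec : specRad G = sSup (spectrum ℝ A) := by
    rw [hA]
    unfold specRad
    congr!
  set rho : ℝ := Real.sqrt lam with hrhodef
  have hrho_pos : 0 < rho := Real.sqrt_pos.mpr hlam_pos
  have hrho2 : rho * rho = lam := Real.mul_self_sqrt (le_of_lt hlam_pos)
  obtain ⟨z, hz0, hzeig⟩ := exists_top_eigvec A hAherm
  have hzeq : A.mulVec z = rho • z := by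
    rw [hzeig, ← hspec, heq]
  set z' : (Fin p ⊕ Fin q) → ℝ := fun k => |z k| with hz'def
  have hz'nn : ∀ k, 0 ≤ z' k := fun k => abs_nonneg _
  have hz'ne : ∃ k, 0 < z' k := by
    have : ∃ k, z k ≠ 0 := Function.ne_iff.mp hz0
    obtain ⟨k, hk⟩ := this
    exact ⟨k, by rw [hz'def]; exact abs_pos.mpr hk⟩
  have hAz'_ge : ∀ k, rho * z' k ≤ (A.mulVec z') k := by
    intro k
    have h1 : (A.mulVec z) k = rho * z k := by
      rw [hzeq]; simp
    have h2 : (A.mulVec z') k = ∑ m ∈ G.neighborFinset k, z' m := by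
      rw [hA]; simp
    have h3 : (A.mulVec z) k = ∑ m ∈ G.neighborFinset k, z m := by
      rw [hA]; simp
    rw [h2]
    have h4 : rho * z' k = |(A.mulVec z) k| := by
      rw [h1, abs_mul, abs_of_nonneg (le_of_lt hrho_pos), hz'def]
    rw [h4, h3]
    calc |∑ m ∈ G.neighborFinset k, z m| ≤ ∑ m ∈ G.neighborFinset k, |z m| :=
          Finset.abs_sum_le_sum_abs _ _
      _ = ∑ m ∈ G.neighborFinset k, z' m := by rw [hz'def]
  -- the test vector w
  set v : Fin q → ℝ := fun j => (∑ i' ∈ NL j, u i') / rho with hvdef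
  set w : (Fin p ⊕ Fin q) → ℝ := Sum.elim u v with hwdef
  have hv_pos : ∀ j, 0 < v j := by
    intro j
    rw [hvdef]
    dsimp only
    apply div_pos _ hrho_pos
    obtain ⟨i0, hi0⟩ := hnbrR j
    exact Finset.sum_pos (fun i _ => hu_pos i) ⟨i0, hi0⟩
  have hw_pos : ∀ k, 0 < w k := by
    intro k
    cases k with
    | inl i => rw [hwdef]; exact hu_pos i
    | inr j => rw [hwdef]; exact hv_pos j
  have hAw_r : ∀ j, (A.mulVec w) (Sum.inr j) = rho * w (Sum.inr j) := by
    intro j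
    have h2 : (A.mulVec w) (Sum.inr j) = ∑ m ∈ G.neighborFinset (Sum.inr j), w m := by
      rw [hA]; simp
    rw [h2, hnbhdR j, Finset.sum_map]
    have h3 : ∀ i' ∈ NL j, w (Sum.inl i') = u i' := by
      intro i' _
      simp [hwdef]
    rw [Finset.sum_congr rfl (fun i' hi' => by
      simp only [Function.Embedding.coeFn_mk]
      exact h3 i' hi')]
    have h4 : w (Sum.inr j) = v j := by simp [hwdef]
    rw [h4, hvdef]
    dsimp only
    field_simp
  have hAw_l : ∀ i, (A.mulVec w) (Sum.inl i) = ∑ j ∈ NR i, v j := by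
    intro i
    have h2 : (A.mulVec w) (Sum.inl i) = ∑ m ∈ G.neighborFinset (Sum.inl i), w m := by
      rw [hA]; simp
    rw [h2, hnbhdL i, Finset.sum_map]
    apply Finset.sum_congr rfl
    intro j _
    simp [hwdef]
  have ROWLE : ∀ i, ∑ j ∈ NR i, (∑ i' ∈ NL j, u i') ≤ lam * u i := by
    intro i
    have := DECOMP i
    linarith [hs1 i, hs2 i, hs3 i, hs4 i]
  have hAw_le : ∀ k, (A.mulVec w) k ≤ rho * w k := by
    intro k
    cases k with
    | inl i =>
      rw [hAw_l i]
      have h1 : ∑ j ∈ NR i, v j = (∑ j ∈ NR i, (∑ i' ∈ NL j, u i')) / rho := by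
        simp only [Finset.sum_div, hvdef]
      rw [h1]
      have h4 : w (Sum.inl i) = u i := by simp [hwdef]
      rw [h4, div_le_iff₀ hrho_pos]
      have h5 : rho * u i * rho = lam * u i := by rw [← hrho2]; ring
      rw [h5]
      exact ROWLE i
    | inr j => rw [hAw_r j]
  -- symmetry pairing
  have hsym : ∀ (x y : (Fin p ⊕ Fin q) → ℝ),
      ∑ k, x k * (A.mulVec y) k = ∑ k, (A.mulVec x) k * y k := by
    intro x y
    have e1 : ∀ k, x k * (A.mulVec y) k = ∑ m, if G.Adj k m then x k * y m else 0 := by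
      intro k
      have : (A.mulVec y) k = ∑ m ∈ G.neighborFinset k, y m := by rw [hA]; simp
      rw [this, Finset.mul_sum, SimpleGraph.neighborFinset_eq_filter, Finset.sum_filter]
    have e2 : ∀ k, (A.mulVec x) k * y k = ∑ m, if G.Adj k m then x m * y k else 0 := by
      intro k
      have : (A.mulVec x) k = ∑ m ∈ G.neighborFinset k, x m := by rw [hA]; simp
      rw [this, Finset.sum_mul, SimpleGraph.neighborFinset_eq_filter, Finset.sum_filter]
    rw [Finset.sum_congr rfl (fun k _ => e1 k), Finset.sum_congr rfl (fun k _ => e2 k)]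
    rw [Finset.sum_comm]
    apply Finset.sum_congr rfl
    intro k _
    apply Finset.sum_congr rfl
    intro m _
    have : G.Adj k m ↔ G.Adj m k := G.adj_comm _ _
    by_cases hadj : G.Adj k m
    · rw [if_pos hadj, if_pos (this.mp hadj)]
    · rw [if_neg hadj, if_neg (fun hc => hadj (this.mpr hc))]
  have hterm1 : ∀ k, 0 ≤ z' k * (rho * w k - (A.mulVec w) k) := by
    intro k
    exact mul_nonneg (hz'nn k) (by linarith [hAw_le k])
  have hterm2 : ∀ k, (rho * z' k - (A.mulVec z') k) * w k ≤ 0 := by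
    intro k
    exact mul_nonpos_of_nonpos_of_nonneg (by linarith [hAz'_ge k]) (le_of_lt (hw_pos k))
  have hDD : ∑ k, z' k * (rho * w k - (A.mulVec w) k)
      = ∑ k, (rho * z' k - (A.mulVec z') k) * w k := by
    have h6 := hsym z' w
    have h7 : ∀ k, z' k * (rho * w k - (A.mulVec w) k)
        = rho * (z' k * w k) - z' k * (A.mulVec w) k := by intro k; ring
    have h8 : ∀ k, (rho * z' k - (A.mulVec z') k) * w k
        = rho * (z' k * w k) - (A.mulVec z') k * w k := by intro k; ring
    rw [Finset.sum_congr rfl (fun k _ => h7 k), Finset.sum_congr rfl (fun k _ => h8 k),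
      Finset.sum_sub_distrib, Finset.sum_sub_distrib, h6]
  have hsum0 : ∑ k, z' k * (rho * w k - (A.mulVec w) k) = 0 := by
    have hle : ∑ k, (rho * z' k - (A.mulVec z') k) * w k ≤ 0 :=
      Finset.sum_nonpos (fun k _ => hterm2 k)
    have hge : 0 ≤ ∑ k, z' k * (rho * w k - (A.mulVec w) k) :=
      Finset.sum_nonneg (fun k _ => hterm1 k)
    rw [hDD] at hge ⊢
    linarith
  have hAz'eq : ∀ k, (A.mulVec z') k = rho * z' k := by
    intro k
    have hsum0' : ∑ k, (rho * z' k - (A.mulVec z') k) * w k = 0 := by rw [← hDD]; exact hsum0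
    have h9 : ∑ k, -((rho * z' k - (A.mulVec z') k) * w k) = 0 := by
      rw [Finset.sum_neg_distrib, hsum0', neg_zero]
    have h10 := (Finset.sum_eq_zero_iff_of_nonneg
      (fun k _ => by linarith [hterm2 k])).mp h9 k (Finset.mem_univ k)
    have h11 : (rho * z' k - (A.mulVec z') k) * w k = 0 := by linarith
    rcases mul_eq_zero.mp h11 with h | h
    · linarith
    · exact absurd h (ne_of_gt (hw_pos k))
  have hz'pos : ∀ k, 0 < z' k := by
    have heg : ∀ k, ∑ m ∈ G.neighborFinset k, z' m = rho * z' k := by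
      intro k
      rw [← hAz'eq k, hA]
      simp
    obtain ⟨k0, hk0⟩ := hz'ne
    intro k
    obtain ⟨wk⟩ := hconn.preconnected k0 k
    exact pos_on_walk G z' hz'nn rho heg wk hk0
  have hAweq : ∀ k, (A.mulVec w) k = rho * w k := by
    intro k
    have h10 := (Finset.sum_eq_zero_iff_of_nonneg
      (fun k _ => hterm1 k)).mp hsum0 k (Finset.mem_univ k)
    rcases mul_eq_zero.mp h10 with h | h
    · exact absurd h (ne_of_gt (hz'pos k))
    · linarith
  have ROWEQ : ∀ i, ∑ j ∈ NR i, (∑ i' ∈ NL j, u i') = lam * u i := by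
    intro i
    have h1 := hAweq (Sum.inl i)
    rw [hAw_l i] at h1
    have h2 : ∑ j ∈ NR i, v j = (∑ j ∈ NR i, (∑ i' ∈ NL j, u i')) / rho := by
      simp only [Finset.sum_div, hvdef]
    rw [h2] at h1
    have h4 : w (Sum.inl i) = u i := by simp [hwdef]
    rw [h4] at h1
    have h5 : rho * u i * rho = lam * u i := by rw [← hrho2]; ring
    field_simp at h1
    rw [← h5]
    linarith [h1]
  -- extraction of equalities
  have SLACKS : ∀ i, (∑ j ∈ NR i, gam*(SD - ∑ i' ∈ NL j, e i')) = 0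
      ∧ (∑ j ∈ NR i, (f j - ((G.degree (Sum.inr j) : ℝ) - b))) = 0
      ∧ (TD - ∑ j ∈ NR i, f j) = 0
      ∧ (lam * u i - ((G.degree (Sum.inl i) : ℝ) * (gam*SD + b) + TD)) = 0 := by
    intro i
    have hd := DECOMP i
    rw [ROWEQ i] at hd
    have h1 := hs1 i; have h2 := hs2 i; have h3 := hs3 i; have h4 := hs4 i
    exact ⟨by linarith, by linarith, by linarith, by linarith⟩
  have hgb : 0 < gam*SD + b := by nlinarith [hgam_pos, hSD0]
  have hdeg_ge : ∀ i : Fin p, ¬(i < s) → (G.degree (Sum.inl i) : ℝ) = a := by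
    intro i hi
    have h4 := (SLACKS i).2.2.2
    rw [hu1 i hi, mul_one] at h4
    have hz : (a - (G.degree (Sum.inl i) : ℝ)) * (gam*SD + b) = 0 := by
      linear_combination h4 - key2
    rcases mul_eq_zero.mp hz with h | h
    · linarith
    · exact absurd h (ne_of_gt hgb)
  have hCJ : ∀ i, ∀ j ∈ NR i, ∑ i' ∈ NL j, e i' = SD := by
    intro i j hj
    have h1 := (SLACKS i).1
    have h2 : ∀ j' ∈ NR i, 0 ≤ gam*(SD - ∑ i' ∈ NL j', e i') := by
      intro j' _
      have := heup (NL j')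
      nlinarith [hgam_pos]
    have h3 := (Finset.sum_eq_zero_iff_of_nonneg h2).mp h1 j hj
    rcases mul_eq_zero.mp h3 with h | h
    · exact absurd h (ne_of_gt hgam_pos)
    · linarith
  have hFJ : ∀ i, ∀ j ∈ NR i, f j = (G.degree (Sum.inr j) : ℝ) - b := by
    intro i j hj
    have h1 := (SLACKS i).2.1
    have h2 : ∀ j' ∈ NR i, 0 ≤ f j' - ((G.degree (Sum.inr j') : ℝ) - b) := by
      intro j' _
      linarith [hfge j']
    have h3 := (Finset.sum_eq_zero_iff_of_nonneg h2).mp h1 j hj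
    linarith
  have hFO : ∀ i : Fin p, ∀ j, j ∉ NR i → f j = 0 := by
    intro i j hj
    have h3 := (SLACKS i).2.2.1
    have hsd := Finset.sum_sdiff (Finset.subset_univ (NR i)) (f := f)
    have h5 : ∑ j' ∈ Finset.univ \ NR i, f j' = 0 := by
      rw [hTDf] at h3
      linarith
    exact (Finset.sum_eq_zero_iff_of_nonneg (fun j' _ => hf0 j')).mp h5 j
      (Finset.mem_sdiff.mpr ⟨Finset.mem_univ j, hj⟩)
  have hEO : ∀ (i : Fin p) (j : Fin q), j ∈ NR i → ∀ i', i' ∉ NL j → e i' = 0 := by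
    intro i j hj i' hi'
    have h1 := hCJ i j hj
    have hsd := Finset.sum_sdiff (Finset.subset_univ (NL j)) (f := e)
    have h5 : ∑ i'' ∈ Finset.univ \ NL j, e i'' = 0 := by
      rw [← hSDe] at hsd
      linarith
    exact (Finset.sum_eq_zero_iff_of_nonneg (fun i'' _ => he0 i'')).mp h5 i'
      (Finset.mem_sdiff.mpr ⟨Finset.mem_univ i', hi'⟩)
  -- final assembly
  set S1 : Finset (Fin p) :=
    Finset.univ.filter (fun i => G.degree (Sum.inl s) < G.degree (Sum.inl i)) with hS1
  set T1 : Finset (Fin q) :=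
    Finset.univ.filter (fun j => G.degree (Sum.inr t) < G.degree (Sum.inr j)) with hT1
  have hS1mem' : ∀ i : Fin p, i ∈ S1 ↔ G.degree (Sum.inl s) < G.degree (Sum.inl i) := by
    intro i; rw [hS1]; simp
  have hT1mem' : ∀ j : Fin q, j ∈ T1 ↔ G.degree (Sum.inr t) < G.degree (Sum.inr j) := by
    intro j; rw [hT1]; simp
  have hS1mem : ∀ i : Fin p, i ∈ S1 ↔ i.val < S1.card := by
    apply initseg
    intro i i' hii hi'
    rw [hS1mem'] at hi' ⊢
    exact lt_of_lt_of_le hi' (hdU i i' hii)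
  have hT1mem : ∀ j : Fin q, j ∈ T1 ↔ j.val < T1.card := by
    apply initseg
    intro j j' hjj hj'
    rw [hT1mem'] at hj' ⊢
    exact lt_of_lt_of_le hj' (hdV j j' hjj)
  have hS1lt : ∀ i ∈ S1, i < s := by
    intro i hi
    rw [hS1mem'] at hi
    by_contra hcon
    exact absurd (hdU s i (le_of_not_gt hcon)) (not_le.mpr hi)
  have hT1lt : ∀ j ∈ T1, j < t := by
    intro j hj
    rw [hT1mem'] at hj
    by_contra hcon
    exact absurd (hdV t j (le_of_not_gt hcon)) (not_le.mpr hj)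
  refine ⟨S1.card, T1.card, ?_, ?_, ?_, ?_, ?_⟩
  · by_contra hcon
    push_neg at hcon
    have := (hS1mem s).mpr hcon
    rw [hS1mem'] at this
    omega
  · by_contra hcon
    push_neg at hcon
    have := (hT1mem t).mpr hcon
    rw [hT1mem'] at this
    omega
  · intro i j hij
    rcases hij with hij | hij
    · -- i is a "large degree" left vertex
      have hiS1 : i ∈ S1 := (hS1mem i).mpr hij
      have his : i < s := hS1lt i hiS1
      have hideg : (a:ℝ) < (G.degree (Sum.inl i) : ℝ) := by
        rw [ha]
        exact_mod_cast (hS1mem' i).mp hiS1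
      have hei : 0 < e i := by
        rw [hedef]
        dsimp only
        rw [if_pos his]
        linarith
      obtain ⟨i0, hi0⟩ := hnbrR j
      have hj0 : j ∈ NR i0 := by
        rw [hNR]
        simp only [Finset.mem_filter, Finset.mem_univ, true_and]
        rw [hNL] at hi0
        simp only [Finset.mem_filter, Finset.mem_univ, true_and] at hi0
        exact hi0
      by_contra hnadj
      have hiNL : i ∉ NL j := by
        rw [hNL]
        simp only [Finset.mem_filter, Finset.mem_univ, true_and]
        exact hnadj
      have := hEO i0 j hj0 i hiNL
      linarith
    · have hjT1 : j ∈ T1 := (hT1mem j).mpr hij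
      have hjt : j < t := hT1lt j hjT1
      have hjdeg : (b:ℝ) < (G.degree (Sum.inr j) : ℝ) := by
        rw [hb]
        exact_mod_cast (hT1mem' j).mp hjT1
      have hfj : 0 < f j := by
        rw [hfdef]
        dsimp only
        rw [if_pos hjt]
        linarith
      by_contra hnadj
      have hjNR : j ∉ NR i := by
        rw [hNR]
        simp only [Finset.mem_filter, Finset.mem_univ, true_and]
        exact hnadj
      have := hFO i j hjNR
      linarith
  · -- left degrees constant above S1.card
    have hconst : ∀ i : Fin p, S1.card ≤ i.val → G.degree (Sum.inl i) = G.degree (Sum.inl s) := by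
      intro i hi
      have hiS1 : i ∉ S1 := fun hmem => by
        rw [hS1mem i] at hmem
        omega
      rw [hS1mem'] at hiS1
      push_neg at hiS1
      by_cases his : i < s
      · exact le_antisymm hiS1 (hdU i s (le_of_lt his))
      · have := hdeg_ge i his
        rw [ha] at this
        exact_mod_cast this
    intro i i' hi hi'
    rw [hconst i hi, hconst i' hi']
  · -- right degrees constant above T1.card
    have hconst : ∀ j : Fin q, T1.card ≤ j.val → G.degree (Sum.inr j) = G.degree (Sum.inr t) := by
      intro j hj
      have hjT1 : j ∉ T1 := fun hmem => by
        rw [hT1mem j] at hmem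
        omega
      rw [hT1mem'] at hjT1
      push_neg at hjT1
      by_cases hjt : j < t
      · exact le_antisymm hjT1 (hdV j t (le_of_lt hjt))
      · obtain ⟨i0, hi0⟩ := hnbrR j
        have hj0 : j ∈ NR i0 := by
          rw [hNR]
          simp only [Finset.mem_filter, Finset.mem_univ, true_and]
          rw [hNL] at hi0
          simp only [Finset.mem_filter, Finset.mem_univ, true_and] at hi0
          exact hi0
        have h1 := hFJ i0 j hj0
        have h2 : f j = 0 := by
          rw [hfdef]
          dsimp only
          rw [if_neg hjt]
        rw [h2] at h1
        have : (G.degree (Sum.inr j) : ℝ) = b := by linarith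
        rw [hb] at this
        exact_mod_cast this
    intro j j' hj hj'
    rw [hconst j hj, hconst j' hj']
end

section
/- Let G be a simple bipartite graph with e edges, bipartition (U,V), |U| = p, |V| = q, and degree sequences d_1 ≥ ... ≥ d_p on U and d'_1 ≥ ... ≥ d'_q on V. Then ρ(G) ≤ sqrt(e − (q − d_1)·d'_q). -/
set_option maxHeartbeats 1000000 in
theorem stmt6 (p q e : ℕ) (hp : 0 < p) (hq : 0 < q)
    (G : SimpleGraph (Fin p ⊕ Fin q)) [DecidableRel G.Adj]
    (hL : ∀ i j : Fin p, ¬ G.Adj (Sum.inl i) (Sum.inl j))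
    (hR : ∀ i j : Fin q, ¬ G.Adj (Sum.inr i) (Sum.inr j))
    (hdU : ∀ i j : Fin p, i ≤ j → G.degree (Sum.inl j) ≤ G.degree (Sum.inl i))
    (hdV : ∀ i j : Fin q, i ≤ j → G.degree (Sum.inr j) ≤ G.degree (Sum.inr i))
    (hcard : G.edgeFinset.card = e) :
    specRad G ≤ Real.sqrt ((e : ℝ)
      - ((q : ℝ) - (G.degree (Sum.inl ⟨0, hp⟩) : ℝ))
        * (G.degree (Sum.inr ⟨q - 1, by omega⟩) : ℝ)) := by
  have hAeq : (letI := Classical.decEq (Fin p ⊕ Fin q); letI := Classical.decRel G.Adj;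
      G.adjMatrix ℝ) = G.adjMatrix ℝ := by
    ext i j
    simp [SimpleGraph.adjMatrix]
  have hspec : specRad G = sSup (spectrum ℝ (G.adjMatrix ℝ)) := by
    unfold specRad
    congr!
  rw [hspec]
  refine Real.sSup_le ?_ (Real.sqrt_nonneg _)
  intro μ hμ
  rcases le_or_gt μ 0 with h0 | h0
  · exact h0.trans (Real.sqrt_nonneg _)
  set d1 : ℕ := G.degree (Sum.inl ⟨0, hp⟩) with hd1def
  set dq : ℕ := G.degree (Sum.inr ⟨q - 1, by omega⟩) with hdqdef
  -- degree as a sum of indicators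
  have hdeg : ∀ w : Fin p ⊕ Fin q, G.degree w = ∑ u, if G.Adj w u then 1 else 0 := by
    intro w
    rw [← SimpleGraph.card_neighborFinset_eq_degree, SimpleGraph.neighborFinset_eq_filter,
      Finset.card_filter]
  -- sum of degrees on the right side equals e
  have hsides : ∑ i, G.degree (Sum.inl i) = ∑ j, G.degree (Sum.inr j) := by
    calc ∑ i, G.degree (Sum.inl i)
        = ∑ i, ∑ j : Fin q, (if G.Adj (Sum.inl i) (Sum.inr j) then 1 else 0) := by
          refine Finset.sum_congr rfl fun i _ => ?_
          rw [hdeg, Fintype.sum_sum_type]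
          simp [hL i]
      _ = ∑ j : Fin q, ∑ i, (if G.Adj (Sum.inr j) (Sum.inl i) then 1 else 0) := by
          rw [Finset.sum_comm]
          refine Finset.sum_congr rfl fun j _ => Finset.sum_congr rfl fun i _ => ?_
          exact if_congr (G.adj_comm _ _) rfl rfl
      _ = ∑ j, G.degree (Sum.inr j) := by
          refine Finset.sum_congr rfl fun j _ => ?_
          rw [hdeg, Fintype.sum_sum_type]
          simp [hR j]
  have hsumV : ∑ j, G.degree (Sum.inr j) = e := by
    have h2 : ∑ v, G.degree v = 2 * G.edgeFinset.card :=
      SimpleGraph.sum_degrees_eq_twice_card_edges G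
    rw [Fintype.sum_sum_type] at h2
    omega
  -- eigenvector
  have hdet : (algebraMap ℝ (Matrix (Fin p ⊕ Fin q) (Fin p ⊕ Fin q) ℝ) μ
      - G.adjMatrix ℝ).det = 0 := by
    by_contra hd
    exact (spectrum.mem_iff.mp hμ) ((Matrix.isUnit_iff_isUnit_det _).mpr
      (isUnit_iff_ne_zero.mpr hd))
  obtain ⟨x, hx0, hxe⟩ := Matrix.exists_mulVec_eq_zero_iff.mpr hdet
  have heig : (G.adjMatrix ℝ).mulVec x = μ • x := by
    rw [Matrix.sub_mulVec, sub_eq_zero] at hxe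
    rw [← hxe, Algebra.algebraMap_eq_smul_one, Matrix.smul_mulVec, Matrix.one_mulVec]
  have hrow : ∀ w, ∑ u ∈ G.neighborFinset w, x u = μ * x w := by
    intro w
    have := congrFun heig w
    simpa using this
  -- the left part of x is nonzero
  have hUne : ∃ i : Fin p, x (Sum.inl i) ≠ 0 := by
    by_contra hno
    push_neg at hno
    apply hx0
    funext w
    show x w = 0
    cases w with
    | inl i => exact hno i
    | inr j =>
      have h := hrow (Sum.inr j)
      have hz : ∑ u ∈ G.neighborFinset (Sum.inr j), x u = 0 := by
        apply Finset.sum_eq_zero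
        intro u hu
        rw [SimpleGraph.mem_neighborFinset] at hu
        cases u with
        | inl k => exact hno k
        | inr k => exact absurd hu (hR j k)
      have hmz : μ * x (Sum.inr j) = 0 := by rw [← h, hz]
      exact (mul_eq_zero.mp hmz).resolve_left (ne_of_gt h0)
  obtain ⟨i0, hi0mem, hmax⟩ := Finset.exists_max_image Finset.univ
    (fun i : Fin p => |x (Sum.inl i)|) ⟨⟨0, hp⟩, Finset.mem_univ _⟩
  set X : ℝ := |x (Sum.inl i0)| with hXdef
  have hXpos : 0 < X := by
    obtain ⟨i, hi⟩ := hUne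
    exact lt_of_lt_of_le (abs_pos.mpr hi) (hmax i (Finset.mem_univ _))
  -- the key inequality μ^2 * X ≤ S * X
  have hbound : ∀ w ∈ G.neighborFinset (Sum.inl i0), |μ * x w| ≤ (G.degree w : ℝ) * X := by
    intro w hw
    rw [← hrow w]
    calc |∑ u ∈ G.neighborFinset w, x u| ≤ ∑ u ∈ G.neighborFinset w, |x u| :=
          Finset.abs_sum_le_sum_abs _ _
      _ ≤ ∑ _u ∈ G.neighborFinset w, X := by
          refine Finset.sum_le_sum fun u hu => ?_
          rw [SimpleGraph.mem_neighborFinset] at hw hu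
          cases w with
          | inl k => exact absurd hw (hL i0 k)
          | inr j =>
            cases u with
            | inl k => exact hmax k (Finset.mem_univ _)
            | inr k => exact absurd hu (hR j k)
      _ = (G.degree w : ℝ) * X := by
          rw [Finset.sum_const, nsmul_eq_mul, SimpleGraph.card_neighborFinset_eq_degree]
  have hstep : μ ^ 2 * x (Sum.inl i0) = ∑ w ∈ G.neighborFinset (Sum.inl i0), μ * x w := by
    rw [← Finset.mul_sum, hrow]
    ring
  have hS : μ ^ 2 * X ≤ (∑ w ∈ G.neighborFinset (Sum.inl i0), (G.degree w : ℝ)) * X := by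
    have h1 : μ ^ 2 * X = |μ ^ 2 * x (Sum.inl i0)| := by
      rw [abs_mul, abs_of_nonneg (sq_nonneg μ)]
    rw [h1, hstep, Finset.sum_mul]
    calc |∑ w ∈ G.neighborFinset (Sum.inl i0), μ * x w|
        ≤ ∑ w ∈ G.neighborFinset (Sum.inl i0), |μ * x w| := Finset.abs_sum_le_sum_abs _ _
      _ ≤ ∑ w ∈ G.neighborFinset (Sum.inl i0), (G.degree w : ℝ) * X :=
          Finset.sum_le_sum hbound
  have hmu2 : μ ^ 2 ≤ ∑ w ∈ G.neighborFinset (Sum.inl i0), (G.degree w : ℝ) :=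
    le_of_mul_le_mul_right hS hXpos
  -- bound the degree sum
  set J : Finset (Fin q) := Finset.univ.filter (fun j => G.Adj (Sum.inl i0) (Sum.inr j))
    with hJdef
  have hNimg : G.neighborFinset (Sum.inl i0) = J.image Sum.inr := by
    ext w
    cases w with
    | inl k =>
      simp only [SimpleGraph.mem_neighborFinset, Finset.mem_image]
      constructor
      · intro h; exact absurd h (hL i0 k)
      · rintro ⟨j, _, hj⟩; exact absurd hj (by simp)
    | inr j =>
      simp [SimpleGraph.mem_neighborFinset, hJdef, Sum.inr.injEq]
  have hJcard : J.card = G.degree (Sum.inl i0) := by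
    rw [← SimpleGraph.card_neighborFinset_eq_degree, hNimg,
      Finset.card_image_of_injective _ Sum.inr_injective]
  have hc_le_q : J.card ≤ q := by
    simpa using Finset.card_le_card (Finset.subset_univ J)
  have hc_le_d1 : J.card ≤ d1 := by
    rw [hJcard]
    exact hdU ⟨0, hp⟩ i0 (by exact Fin.mk_le_of_le_val (Nat.zero_le _))
  have hdq_le : ∀ j : Fin q, dq ≤ G.degree (Sum.inr j) := by
    intro j
    refine hdV j ⟨q - 1, by omega⟩ ?_
    rw [Fin.le_def]
    simp only [Fin.val_mk]
    omega
  -- natural number inequality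
  have hnat : (∑ j ∈ J, G.degree (Sum.inr j)) + (q - J.card) * dq ≤ e := by
    have hcompl : (q - J.card) * dq ≤ ∑ j ∈ Jᶜ, G.degree (Sum.inr j) := by
      have hcard : Jᶜ.card = q - J.card := by
        rw [Finset.card_compl]
        simp
      calc (q - J.card) * dq = Jᶜ.card • dq := by rw [hcard, smul_eq_mul]
        _ ≤ ∑ j ∈ Jᶜ, G.degree (Sum.inr j) :=
            Finset.card_nsmul_le_sum _ _ _ (fun j _ => hdq_le j)
    calc (∑ j ∈ J, G.degree (Sum.inr j)) + (q - J.card) * dq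
        ≤ (∑ j ∈ J, G.degree (Sum.inr j)) + ∑ j ∈ Jᶜ, G.degree (Sum.inr j) := by omega
      _ = ∑ j, G.degree (Sum.inr j) := by
          rw [Finset.sum_add_sum_compl]
      _ = e := hsumV
  have hSsum : ∑ w ∈ G.neighborFinset (Sum.inl i0), (G.degree w : ℝ)
      = ((∑ j ∈ J, G.degree (Sum.inr j) : ℕ) : ℝ) := by
    rw [hNimg, Finset.sum_image (fun a _ b _ h => Sum.inr_injective h)]
    push_cast
    rfl
  -- final real arithmetic
  have hfinal : μ ^ 2 ≤ (e : ℝ) - ((q : ℝ) - (d1 : ℝ)) * (dq : ℝ) := by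
    have h1 : ((q : ℝ) - (d1 : ℝ)) * (dq : ℝ) ≤ (((q - J.card : ℕ) : ℝ)) * (dq : ℝ) := by
      apply mul_le_mul_of_nonneg_right _ (by positivity)
      rw [Nat.cast_sub hc_le_q]
      have := (Nat.cast_le (α := ℝ)).mpr hc_le_d1
      linarith
    have h2 : ((∑ j ∈ J, G.degree (Sum.inr j) : ℕ) : ℝ) + ((q - J.card : ℕ) : ℝ) * (dq : ℝ)
        ≤ (e : ℝ) := by
      have := (Nat.cast_le (α := ℝ)).mpr hnat
      push_cast at this ⊢
      linarith
    rw [hSsum] at hmu2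
    linarith
  exact Real.le_sqrt_of_sq_le (by exact_mod_cast hfinal)
end

section
/- Let G be a simple bipartite graph with e edges, bipartition (U,V), |U| = p, |V| = q, and degree sequences d_1 ≥ ... ≥ d_p on U and d'_1 ≥ ... ≥ d'_q on V. Then ρ(G) ≤ sqrt(e − (p − d'_1)·d_p). -/
open Finset

theorem eigvec_of_mem_spectrum {n : Type*} [Fintype n] [DecidableEq n] (A : Matrix n n ℝ) {μ : ℝ}
    (h : μ ∈ spectrum ℝ A) : ∃ x : n → ℝ, x ≠ 0 ∧ A.mulVec x = μ • x := by
  rw [spectrum.mem_iff, Matrix.isUnit_iff_isUnit_det, isUnit_iff_ne_zero, not_not] at h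
  obtain ⟨x, hx0, hx⟩ := (Matrix.exists_mulVec_eq_zero_iff).2 h
  refine ⟨x, hx0, ?_⟩
  rw [Matrix.sub_mulVec] at hx
  have h2 : (algebraMap ℝ (Matrix n n ℝ) μ).mulVec x = μ • x := by
    rw [Algebra.algebraMap_eq_smul_one, Matrix.smul_mulVec, Matrix.one_mulVec]
  rw [h2, sub_eq_zero] at hx
  exact hx.symm

theorem stmt7 (p q e : ℕ) (hp : 0 < p) (hq : 0 < q)
    (G : SimpleGraph (Fin p ⊕ Fin q)) [DecidableRel G.Adj]
    (hL : ∀ i j : Fin p, ¬ G.Adj (Sum.inl i) (Sum.inl j))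
    (hR : ∀ i j : Fin q, ¬ G.Adj (Sum.inr i) (Sum.inr j))
    (hdU : ∀ i j : Fin p, i ≤ j → G.degree (Sum.inl j) ≤ G.degree (Sum.inl i))
    (hdV : ∀ i j : Fin q, i ≤ j → G.degree (Sum.inr j) ≤ G.degree (Sum.inr i))
    (hcard : G.edgeFinset.card = e) :
    specRad G ≤ Real.sqrt ((e : ℝ)
      - ((p : ℝ) - (G.degree (Sum.inr ⟨0, hq⟩) : ℝ))
        * (G.degree (Sum.inl ⟨p - 1, by omega⟩) : ℝ)) := by
  classical
  set C : ℝ := (e : ℝ) - ((p : ℝ) - (G.degree (Sum.inr ⟨0, hq⟩) : ℝ))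
        * (G.degree (Sum.inl ⟨p - 1, by omega⟩) : ℝ) with hC
  -- reduce to the adjacency matrix with the given instance
  have hspec : specRad G = sSup (spectrum ℝ (G.adjMatrix ℝ)) := by
    unfold specRad
    congr!
  rw [hspec]
  apply Real.sSup_le _ (Real.sqrt_nonneg _)
  intro μ hμ
  obtain ⟨x, hx0, hx⟩ := eigvec_of_mem_spectrum _ hμ
  have hev : ∀ w, ∑ w' ∈ G.neighborFinset w, x w' = μ * x w := by
    intro w
    have := congrFun hx w
    rwa [SimpleGraph.adjMatrix_mulVec_apply, Pi.smul_apply, smul_eq_mul] at this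
  set y : Fin q → ℝ := fun v => x (Sum.inr v) with hy
  -- some degree facts
  have hdegU : ∀ u : Fin p, (G.degree (Sum.inl u) : ℝ)
      = ∑ v : Fin q, (if G.Adj (Sum.inl u) (Sum.inr v) then (1:ℝ) else 0) := by
    intro u
    rw [SimpleGraph.degree, SimpleGraph.neighborFinset_eq_filter, Finset.card_filter]
    push_cast
    rw [Fintype.sum_sum_type]
    simp [hL]
  have hdegV : ∀ v : Fin q, (G.degree (Sum.inr v) : ℝ)
      = ∑ u : Fin p, (if G.Adj (Sum.inr v) (Sum.inl u) then (1:ℝ) else 0) := by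
    intro v
    rw [SimpleGraph.degree, SimpleGraph.neighborFinset_eq_filter, Finset.card_filter]
    push_cast
    rw [Fintype.sum_sum_type]
    simp [hR]
  -- handshake: sum of degrees on U side equals e
  have hhandU : ∑ u : Fin p, (G.degree (Sum.inl u) : ℝ) = (e : ℝ) := by
    have h2e : ∑ w : Fin p ⊕ Fin q, G.degree w = 2 * e := by
      rw [SimpleGraph.sum_degrees_eq_twice_card_edges, hcard]
    rw [Fintype.sum_sum_type] at h2e
    have heq : ∑ u : Fin p, (G.degree (Sum.inl u) : ℝ)
        = ∑ v : Fin q, (G.degree (Sum.inr v) : ℝ) := by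
      simp_rw [hdegU, hdegV]
      rw [Finset.sum_comm]
      congr 1; ext v; congr 1; ext u
      congr 1
      exact propext ⟨fun h => h.symm, fun h => h.symm⟩
    have h2e' : (∑ u : Fin p, (G.degree (Sum.inl u) : ℝ))
        + ∑ v : Fin q, (G.degree (Sum.inr v) : ℝ) = 2 * e := by
      have := congrArg (Nat.cast : ℕ → ℝ) h2e
      push_cast at this
      linarith
    rw [← heq] at h2e'
    linarith
  -- minimum degree on U
  have hdmin : ∀ u : Fin p, (G.degree (Sum.inl ⟨p - 1, by omega⟩) : ℝ) ≤ (G.degree (Sum.inl u) : ℝ) := by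
    intro u
    exact_mod_cast hdU u ⟨p - 1, by omega⟩ (by rw [Fin.le_def]; simp; omega)
  have hdmin0 : (0:ℝ) ≤ (G.degree (Sum.inl ⟨p - 1, by omega⟩) : ℝ) := by positivity
  by_cases hyz : ∀ v, y v = 0
  · -- y = 0; then μ = 0 (since x ≠ 0 forces it)
    rcases eq_or_ne μ 0 with h0 | h0
    · rw [h0]; exact Real.sqrt_nonneg _
    · exfalso
      apply hx0
      funext w
      cases w with
      | inr v => exact hyz v
      | inl u =>
        have h1 : ∑ w' ∈ G.neighborFinset (Sum.inl u), x w' = 0 := by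
          apply Finset.sum_eq_zero
          intro w' hw'
          rw [SimpleGraph.mem_neighborFinset] at hw'
          cases w' with
          | inl j => exact absurd hw' (hL u j)
          | inr j => exact hyz j
        have := hev (Sum.inl u)
        rw [h1] at this
        have := mul_eq_zero.mp this.symm
        simpa [h0] using this
  · push_neg at hyz
    obtain ⟨v₁, hv₁⟩ := hyz
    obtain ⟨v₀, -, hmax⟩ := Finset.exists_max_image Finset.univ (fun v => |y v|)
      ⟨v₁, Finset.mem_univ v₁⟩
    set M : ℝ := |y v₀| with hM
    have hM0 : 0 < M := lt_of_lt_of_le (abs_pos.mpr hv₁) (hmax v₁ (Finset.mem_univ v₁))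
    -- every x-value at an inr vertex is ≤ M in absolute value
    have hbound : ∀ v : Fin q, |x (Sum.inr v)| ≤ M := fun v => hmax v (Finset.mem_univ v)
    -- row sum S
    set S : ℝ := ∑ w ∈ G.neighborFinset (Sum.inr v₀), (G.degree w : ℝ) with hS
    have hkey : μ ^ 2 * M ≤ S * M := by
      have e1 : μ ^ 2 * y v₀ = ∑ w ∈ G.neighborFinset (Sum.inr v₀),
          ∑ w' ∈ G.neighborFinset w, x w' := by
        rw [Finset.sum_congr rfl (fun w _ => hev w)]
        rw [← Finset.mul_sum, hev (Sum.inr v₀)]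
        ring
      have e2 : |∑ w ∈ G.neighborFinset (Sum.inr v₀), ∑ w' ∈ G.neighborFinset w, x w'|
          ≤ S * M := by
        refine le_trans (Finset.abs_sum_le_sum_abs _ _) ?_
        rw [hS, Finset.sum_mul]
        apply Finset.sum_le_sum
        intro w hw
        refine le_trans (Finset.abs_sum_le_sum_abs _ _) ?_
        rw [SimpleGraph.mem_neighborFinset] at hw
        -- w is an inl vertex
        obtain ⟨u, rfl⟩ : ∃ u, w = Sum.inl u := by
          cases w with
          | inl u => exact ⟨u, rfl⟩
          | inr j => exact absurd hw (hR v₀ j)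
        have : ∀ w' ∈ G.neighborFinset (Sum.inl u), |x w'| ≤ M := by
          intro w' hw'
          rw [SimpleGraph.mem_neighborFinset] at hw'
          cases w' with
          | inl j => exact absurd hw' (hL u j)
          | inr j => exact hbound j
        calc ∑ w' ∈ G.neighborFinset (Sum.inl u), |x w'|
            ≤ ∑ _w' ∈ G.neighborFinset (Sum.inl u), M := Finset.sum_le_sum this
          _ = (G.degree (Sum.inl u) : ℝ) * M := by
              rw [Finset.sum_const, SimpleGraph.degree, nsmul_eq_mul]
      calc μ ^ 2 * M = |μ ^ 2 * y v₀| := by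
            rw [abs_mul, abs_of_nonneg (sq_nonneg μ), hM]
        _ ≤ S * M := by rw [e1]; exact e2
    have hμ2S : μ ^ 2 ≤ S := le_of_mul_le_mul_right hkey hM0
    -- now bound S by C
    have hSC : S ≤ C := by
      have hS' : S = ∑ u : Fin p,
          (if G.Adj (Sum.inr v₀) (Sum.inl u) then (1:ℝ) else 0) * (G.degree (Sum.inl u) : ℝ) := by
        rw [hS, SimpleGraph.neighborFinset_eq_filter, Finset.sum_filter, Fintype.sum_sum_type]
        simp [hR, Finset.sum_ite, Finset.sum_const]
      set dmin : ℝ := (G.degree (Sum.inl ⟨p - 1, by omega⟩) : ℝ)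
      have hterm : ∀ u : Fin p,
          (if G.Adj (Sum.inr v₀) (Sum.inl u) then (1:ℝ) else 0) * (G.degree (Sum.inl u) : ℝ)
          ≤ (G.degree (Sum.inl u) : ℝ)
            - (1 - (if G.Adj (Sum.inr v₀) (Sum.inl u) then (1:ℝ) else 0)) * dmin := by
        intro u
        by_cases h : G.Adj (Sum.inr v₀) (Sum.inl u) <;> simp [h]
        · exact hdmin u
      have h1 : S ≤ (e : ℝ) - ((p : ℝ) - (G.degree (Sum.inr v₀) : ℝ)) * dmin := by
        rw [hS']
        calc ∑ u : Fin p, (if G.Adj (Sum.inr v₀) (Sum.inl u) then (1:ℝ) else 0) * (G.degree (Sum.inl u) : ℝ)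
            ≤ ∑ u : Fin p, ((G.degree (Sum.inl u) : ℝ)
              - (1 - (if G.Adj (Sum.inr v₀) (Sum.inl u) then (1:ℝ) else 0)) * dmin) :=
              Finset.sum_le_sum (fun u _ => hterm u)
          _ = (e : ℝ) - ((p : ℝ) - (G.degree (Sum.inr v₀) : ℝ)) * dmin := by
              rw [Finset.sum_sub_distrib, hhandU]
              congr 1
              rw [← Finset.sum_mul]
              congr 1
              rw [Finset.sum_sub_distrib, Finset.sum_const, ← hdegV v₀]
              simp
      have h2 : (G.degree (Sum.inr v₀) : ℝ) ≤ (G.degree (Sum.inr ⟨0, hq⟩) : ℝ) := by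
        exact_mod_cast hdV ⟨0, hq⟩ v₀ (by rw [Fin.le_def]; simp)
      rw [hC]
      nlinarith [hdmin0]
    have : μ ^ 2 ≤ C := le_trans hμ2S hSC
    calc μ ≤ |μ| := le_abs_self μ
      _ = Real.sqrt (μ ^ 2) := (Real.sqrt_sq_eq_abs μ).symm
      _ ≤ Real.sqrt C := Real.sqrt_le_sqrt this
end

section
/- Let p, q, e be positive integers with 0 < pq − e < min(p, q), and let d_p, d'_q be real numbers with 1 ≤ d_p ≤ q − 1, 1 ≤ d'_q ≤ p − 1, and d_p + d'_q = e − (p−1)(q−1). Then φ_{p,q}(d_p, d'_q) ≤ sqrt((e + sqrt(e² − 4(q−1)(p − pq + e)(pq − e)))/2) when p ≤ q (and the bound with the roles of p and q exchanged when q ≤ p), i.e., φ_{p,q}(d_p, d'_q) ≤ ρ(K_{p,q}^{{e}}). -/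
set_option maxHeartbeats 1600000 in
lemma helper10 (P Q E dp dq s A B r1 r2 : ℝ)
    (hPQ : P ≤ Q)
    (hD1 : 1 ≤ P * Q - E) (hDP : P * Q - E ≤ P - 1)
    (hdp1 : 1 ≤ dp) (hdp2 : dp ≤ Q - 1)
    (hdq1 : 1 ≤ dq) (hdq2 : dq ≤ P - 1)
    (hsum : dp + dq = E - (P - 1) * (Q - 1))
    (hs : s = P * dp + Q * dq - dp * dq)
    (hA : A = s ^ 2 - 4 * dp * dq * (P * Q - E))
    (hB : B = E ^ 2 - 4 * (Q - 1) * (P - P * Q + E) * (P * Q - E))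
    (hr1 : r1 = Real.sqrt ((2 * E - s + Real.sqrt A) / 2))
    (hr2 : r2 = Real.sqrt ((E + Real.sqrt B) / 2)) :
    r1 ≤ r2 := by
  subst hA hr1 hr2 hB hs
  have hdq' : dq = E - (P - 1) * (Q - 1) - dp := by linarith
  subst hdq'
  set b := Real.sqrt (E ^ 2 - 4 * (Q - 1) * (P - P * Q + E) * (P * Q - E)) with hbdef
  have hP2 : 2 ≤ P := by linarith
  have hQ2 : 2 ≤ Q := by linarith
  have hD0 : (0:ℝ) ≤ P * Q - E := by linarith
  have hw : (0:ℝ) ≤ Q - 1 - dp := by linarith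
  have hv : (0:ℝ) ≤ dp + (P * Q - E) - Q := by linarith
  have hu : (0:ℝ) ≤ dp + (P * Q - E) - P := by linarith
  have hPD : (0:ℝ) ≤ P - (P * Q - E) := by linarith
  have hQD : (0:ℝ) ≤ Q - (P * Q - E) := by linarith
  have hE0 : (0:ℝ) ≤ E := by
    have h1 : (0:ℝ) ≤ (Q - 2) * P := mul_nonneg (by linarith) (by linarith)
    linarith
  -- abbreviate s and sigma
  set s := P * dp + Q * (E - (P - 1) * (Q - 1) - dp) - dp * (E - (P - 1) * (Q - 1) - dp) with hsdef
  have idEs : E - s = (Q - 1 - dp) * (dp + (P * Q - E) - Q) := by rw [hsdef]; ring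
  have hsE : s ≤ E := by have := mul_nonneg hw hv; linarith [idEs]
  have hslb : (Q - 1) + (P - (P * Q - E)) * (P * Q - E) ≤ s := by
    have id2 : s - ((Q - 1) + (P - (P * Q - E)) * (P * Q - E))
        = (P - (P * Q - E)) * (Q - (P * Q - E)) + ((P * Q - E) - 1)
          + (dp - 1) * (dp + (P * Q - E) - Q) + (Q - 2) * (Q - 1 - dp) := by
      rw [hsdef]; ring
    linarith [id2, mul_nonneg hPD hQD, mul_nonneg (by linarith : (0:ℝ) ≤ dp - 1) hv,
      mul_nonneg (by linarith : (0:ℝ) ≤ Q - 2) hw, hD1]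
  have hsig0 : (0:ℝ) ≤ (Q - 1) + (P - (P * Q - E)) * (P * Q - E) := by
    linarith [mul_nonneg hPD hD0]
  have hs0 : (0:ℝ) ≤ s := le_trans hsig0 hslb
  have hB1 : (E - s) ^ 2 ≤ E ^ 2 - 4 * (Q - 1) * (P - P * Q + E) * (P * Q - E) := by
    have id3 : (E ^ 2 - 4 * (Q - 1) * (P - P * Q + E) * (P * Q - E)) - (E - s) ^ 2
        = 2 * (s * (E - s))
          + (s - ((Q - 1) + (P - (P * Q - E)) * (P * Q - E)))
            * (s + ((Q - 1) + (P - (P * Q - E)) * (P * Q - E)))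
          + ((Q - 1) - (P - (P * Q - E)) * (P * Q - E)) ^ 2 := by
      rw [hsdef]; ring
    linarith [id3, mul_nonneg hs0 (by linarith : (0:ℝ) ≤ E - s),
      mul_nonneg (by linarith : (0:ℝ) ≤ s - ((Q - 1) + (P - (P * Q - E)) * (P * Q - E)))
        (by linarith : (0:ℝ) ≤ s + ((Q - 1) + (P - (P * Q - E)) * (P * Q - E))),
      sq_nonneg ((Q - 1) - (P - (P * Q - E)) * (P * Q - E))]
  have hB0 : (0:ℝ) ≤ E ^ 2 - 4 * (Q - 1) * (P - P * Q + E) * (P * Q - E) :=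
    le_trans (sq_nonneg _) hB1
  have hb2 : b ^ 2 = E ^ 2 - 4 * (Q - 1) * (P - P * Q + E) * (P * Q - E) :=
    Real.sq_sqrt hB0
  have hbE : b ≤ E := by
    have h1 : E ^ 2 - 4 * (Q - 1) * (P - P * Q + E) * (P * Q - E) ≤ E ^ 2 := by
      have h2 : (0:ℝ) ≤ (Q - 1) * ((P - (P * Q - E)) * (P * Q - E)) :=
        mul_nonneg (by linarith) (mul_nonneg hPD hD0)
      nlinarith [h2]
    calc b ≤ Real.sqrt (E ^ 2) := Real.sqrt_le_sqrt h1
      _ = E := Real.sqrt_sq hE0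
  have hEs' : E - s ≤ b := by
    have h1 := Real.sqrt_le_sqrt hB1
    rwa [Real.sqrt_sq (by linarith : (0:ℝ) ≤ E - s)] at h1
  have hb0 : (0:ℝ) ≤ b := Real.sqrt_nonneg _
  have h0 : (0:ℝ) ≤ s - E + b := by linarith
  have hA2 : s ^ 2 - 4 * dp * (E - (P - 1) * (Q - 1) - dp) * (P * Q - E)
      ≤ (s - E + b) ^ 2 := by
    have id4 : (s - E + b) ^ 2
          - (s ^ 2 - 4 * dp * (E - (P - 1) * (Q - 1) - dp) * (P * Q - E))
        = 2 * ((E - s) * (E - b))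
          + 4 * ((P * Q - E) * ((Q - 1 - dp) * (dp + (P * Q - E) - P)))
          + (b ^ 2 - (E ^ 2 - 4 * (Q - 1) * (P - P * Q + E) * (P * Q - E))) := by
      rw [hsdef]; ring
    linarith [id4, mul_nonneg (by linarith : (0:ℝ) ≤ E - s) (by linarith : (0:ℝ) ≤ E - b),
      mul_nonneg hD0 (mul_nonneg hw hu), hb2]
  have key : Real.sqrt (s ^ 2 - 4 * dp * (E - (P - 1) * (Q - 1) - dp) * (P * Q - E))
      ≤ s - E + b := by
    calc Real.sqrt (s ^ 2 - 4 * dp * (E - (P - 1) * (Q - 1) - dp) * (P * Q - E))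
        ≤ Real.sqrt ((s - E + b) ^ 2) := Real.sqrt_le_sqrt hA2
      _ = s - E + b := Real.sqrt_sq h0
  exact Real.sqrt_le_sqrt (by linarith)

theorem stmt10 (p q e : ℕ) (hp : 0 < p) (hq : 0 < q) (he : 0 < e)
    (h1 : e < p * q) (h2 : p * q - e < min p q)
    (dp dq : ℝ) (hdp1 : 1 ≤ dp) (hdp2 : dp ≤ (q : ℝ) - 1)
    (hdq1 : 1 ≤ dq) (hdq2 : dq ≤ (p : ℝ) - 1)
    (hsum : dp + dq = (e : ℝ) - ((p : ℝ) - 1) * ((q : ℝ) - 1))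
    (φ : ℝ)
    (hφ : φ = Real.sqrt ((2 * (e : ℝ) - ((p : ℝ) * dp + (q : ℝ) * dq - dp * dq)
      + Real.sqrt (((p : ℝ) * dp + (q : ℝ) * dq - dp * dq)^2
        - 4 * dp * dq * ((p : ℝ) * (q : ℝ) - (e : ℝ)))) / 2)) :
    (p ≤ q → φ ≤ Real.sqrt (((e : ℝ) + Real.sqrt ((e : ℝ)^2
      - 4 * ((q : ℝ) - 1) * ((p : ℝ) - (p : ℝ) * (q : ℝ) + (e : ℝ))
        * ((p : ℝ) * (q : ℝ) - (e : ℝ)))) / 2)) ∧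
    (q ≤ p → φ ≤ Real.sqrt (((e : ℝ) + Real.sqrt ((e : ℝ)^2
      - 4 * ((p : ℝ) - 1) * ((q : ℝ) - (p : ℝ) * (q : ℝ) + (e : ℝ))
        * ((p : ℝ) * (q : ℝ) - (e : ℝ)))) / 2)) := by
  have hn1 : e + 1 ≤ p * q := h1
  have hn2 : p * q + 1 ≤ e + p := by omega
  have hn3 : p * q + 1 ≤ e + q := by omega
  have hc1 : (e : ℝ) + 1 ≤ (p : ℝ) * (q : ℝ) := by exact_mod_cast hn1
  have hc2 : (p : ℝ) * (q : ℝ) + 1 ≤ (e : ℝ) + (p : ℝ) := by exact_mod_cast hn2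
  have hc3 : (p : ℝ) * (q : ℝ) + 1 ≤ (e : ℝ) + (q : ℝ) := by exact_mod_cast hn3
  constructor
  · intro hle
    have hPQ : (p : ℝ) ≤ (q : ℝ) := by exact_mod_cast hle
    exact helper10 (p : ℝ) (q : ℝ) (e : ℝ) dp dq
      ((p : ℝ) * dp + (q : ℝ) * dq - dp * dq)
      (((p : ℝ) * dp + (q : ℝ) * dq - dp * dq)^2
        - 4 * dp * dq * ((p : ℝ) * (q : ℝ) - (e : ℝ)))
      ((e : ℝ)^2 - 4 * ((q : ℝ) - 1) * ((p : ℝ) - (p : ℝ) * (q : ℝ) + (e : ℝ))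
        * ((p : ℝ) * (q : ℝ) - (e : ℝ)))
      φ _ hPQ (by linarith) (by linarith) hdp1 hdp2 hdq1 hdq2 hsum rfl rfl rfl hφ rfl
  · intro hle
    have hPQ : (q : ℝ) ≤ (p : ℝ) := by exact_mod_cast hle
    exact helper10 (q : ℝ) (p : ℝ) (e : ℝ) dq dp
      ((p : ℝ) * dp + (q : ℝ) * dq - dp * dq)
      (((p : ℝ) * dp + (q : ℝ) * dq - dp * dq)^2
        - 4 * dp * dq * ((p : ℝ) * (q : ℝ) - (e : ℝ)))
      ((e : ℝ)^2 - 4 * ((p : ℝ) - 1) * ((q : ℝ) - (p : ℝ) * (q : ℝ) + (e : ℝ))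
        * ((p : ℝ) * (q : ℝ) - (e : ℝ)))
      φ _ hPQ (by linarith) (by linarith) hdq1 hdq2 hdp1 hdp2 (by linarith)
      (by ring) (by ring) (by ring) hφ rfl
end

section
/- Let p ≤ q and e be positive integers with 0 ≤ pq − e < p. Then the spectral radius of K_{p,q}^{{e}} equals sqrt((e + sqrt(e² − 4(q−1)(p − pq + e)(pq − e)))/2). -/
/-- `K_{p,q}^{{e}}` for `p ≤ q`: the complete bipartite graph `K_{p,q}` with `pq - e` edges
deleted, all incident on a common vertex (the last one) of the partite set of order `q`. -/
def KpqE (p q e : ℕ) : SimpleGraph (Fin p ⊕ Fin q) :=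
  SimpleGraph.fromRel (fun x y =>
    match x, y with
    | Sum.inl i, Sum.inr j => j.val < q - 1 ∨ i.val < p - (p * q - e)
    | _, _ => False)

open Sum Finset SimpleGraph

lemma algmap_mulVec {n : Type*} [Fintype n] [DecidableEq n] (μ : ℝ) (v : n → ℝ) :
    (algebraMap ℝ (Matrix n n ℝ) μ).mulVec v = μ • v := by
  rw [Algebra.algebraMap_eq_smul_one, Matrix.smul_mulVec, Matrix.one_mulVec]

lemma mem_spectrum_iff_exists {n : Type*} [Fintype n] [DecidableEq n]
    (A : Matrix n n ℝ) (μ : ℝ) :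
    μ ∈ spectrum ℝ A ↔ ∃ v ≠ 0, A.mulVec v = μ • v := by
  rw [spectrum.mem_iff, Matrix.isUnit_iff_isUnit_det, isUnit_iff_ne_zero, not_ne_iff,
    ← Matrix.exists_mulVec_eq_zero_iff]
  constructor
  · rintro ⟨v, hv, h⟩
    refine ⟨v, hv, ?_⟩
    rw [Matrix.sub_mulVec, algmap_mulVec, sub_eq_zero] at h
    exact h.symm
  · rintro ⟨v, hv, h⟩
    exact ⟨v, hv, by rw [Matrix.sub_mulVec, algmap_mulVec, h, sub_self]⟩

lemma specRad_eq {V : Type*} [Fintype V] [DecidableEq V] (G : SimpleGraph V) [DecidableRel G.Adj] :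
    specRad G = sSup (spectrum ℝ (G.adjMatrix ℝ)) := by
  unfold specRad
  congr!

variable {p q e : ℕ}

lemma kpqE_adj_inl_inr (i : Fin p) (j : Fin q) :
    (KpqE p q e).Adj (Sum.inl i) (Sum.inr j) ↔ (j.val < q - 1 ∨ i.val < p - (p * q - e)) := by
  simp [KpqE, SimpleGraph.fromRel_adj]

lemma kpqE_adj_inl_inl (i i' : Fin p) : ¬ (KpqE p q e).Adj (Sum.inl i) (Sum.inl i') := by
  simp [KpqE, SimpleGraph.fromRel_adj]

lemma kpqE_adj_inr_inl (i : Fin p) (j : Fin q) :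
    (KpqE p q e).Adj (Sum.inr j) (Sum.inl i) ↔ (j.val < q - 1 ∨ i.val < p - (p * q - e)) := by
  rw [(KpqE p q e).adj_comm]; exact kpqE_adj_inl_inr i j

lemma kpqE_adj_inr_inr (j j' : Fin q) : ¬ (KpqE p q e).Adj (Sum.inr j) (Sum.inr j') := by
  simp [KpqE, SimpleGraph.fromRel_adj]

lemma sum_fin_ite {n : ℕ} (k : ℕ) (hk : k ≤ n) (c d : ℝ) :
    ∑ j : Fin n, (if j.val < k then c else d) = k * c + (n - k : ℕ) * d := by
  rw [Fin.sum_univ_eq_sum_range (fun x => if x < k then c else d) n]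
  rw [Finset.range_eq_Ico, ← Finset.sum_Ico_consecutive _ (Nat.zero_le k) hk]
  rw [← Finset.range_eq_Ico]
  have h1 : ∑ x ∈ Finset.range k, (if x < k then c else d) = k * c := by
    rw [Finset.sum_congr rfl (fun x hx => if_pos (Finset.mem_range.mp hx))]
    simp [mul_comm]
  have h2 : ∑ x ∈ Finset.Ico k n, (if x < k then c else d) = (n - k : ℕ) * d := by
    rw [Finset.sum_congr rfl (fun x hx => if_neg (by
      have := (Finset.mem_Ico.mp hx).1; omega))]
    simp [Nat.card_Ico, mul_comm]
  rw [h1, h2]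

section rows
variable [DecidableEq (Fin p ⊕ Fin q)] [DecidableRel (KpqE p q e).Adj]

set_option linter.unusedSectionVars false

lemma row_inl (hq : 0 < q) (v : Fin p ⊕ Fin q → ℝ) (i : Fin p) :
    ((KpqE p q e).adjMatrix ℝ).mulVec v (Sum.inl i) =
      (∑ j : Fin q, if j.val < q - 1 then v (Sum.inr j) else 0)
      + (if i.val < p - (p * q - e) then v (Sum.inr ⟨q - 1, by omega⟩) else 0) := by
  have h0 : ((KpqE p q e).adjMatrix ℝ).mulVec v (Sum.inl i)
      = ∑ x : Fin p ⊕ Fin q, (KpqE p q e).adjMatrix ℝ (Sum.inl i) x * v x := rfl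
  rw [h0, Fintype.sum_sum_type]
  have h1 : ∀ i' : Fin p, (KpqE p q e).adjMatrix ℝ (Sum.inl i) (Sum.inl i') * v (Sum.inl i') = 0 := by
    intro i'; simp [SimpleGraph.adjMatrix_apply, kpqE_adj_inl_inl]
  rw [Finset.sum_congr rfl (fun i' _ => h1 i'), Finset.sum_const, smul_zero, zero_add]
  have h2 : ∀ j : Fin q, (KpqE p q e).adjMatrix ℝ (Sum.inl i) (Sum.inr j) * v (Sum.inr j)
      = (if (j.val < q - 1 ∨ i.val < p - (p * q - e)) then (1:ℝ) else 0) * v (Sum.inr j) := by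
    intro j
    rw [SimpleGraph.adjMatrix_apply]
    congr 1
    simp [kpqE_adj_inl_inr]
  rw [Finset.sum_congr rfl (fun j _ => h2 j)]
  by_cases hi : i.val < p - (p * q - e)
  · rw [if_pos hi]
    have : ∀ j : Fin q, (if (j.val < q - 1 ∨ i.val < p - (p * q - e)) then (1:ℝ) else 0) * v (Sum.inr j)
        = (if j.val < q - 1 then v (Sum.inr j) else 0) + (if j = ⟨q - 1, by omega⟩ then v (Sum.inr j) else 0) := by
      intro j
      rw [if_pos (Or.inr hi), one_mul]
      by_cases hj : j.val < q - 1
      · rw [if_pos hj, if_neg (fun h => absurd hj (by simp [h])), add_zero]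
      · rw [if_neg hj, if_pos (by ext; simp; omega), zero_add]
    rw [Finset.sum_congr rfl (fun j _ => this j), Finset.sum_add_distrib]
    congr 1
    rw [Finset.sum_ite_eq' univ (⟨q - 1, by omega⟩ : Fin q) (fun j => v (Sum.inr j))]
    simp
  · rw [if_neg hi, add_zero]
    refine Finset.sum_congr rfl (fun j _ => ?_)
    by_cases hj : j.val < q - 1
    · rw [if_pos (Or.inl hj), if_pos hj, one_mul]
    · rw [if_neg (by tauto), if_neg hj, zero_mul]

lemma row_inr (v : Fin p ⊕ Fin q → ℝ) (j : Fin q) :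
    ((KpqE p q e).adjMatrix ℝ).mulVec v (Sum.inr j) =
      if j.val < q - 1 then (∑ i : Fin p, v (Sum.inl i))
      else (∑ i : Fin p, if i.val < p - (p * q - e) then v (Sum.inl i) else 0) := by
  have h0 : ((KpqE p q e).adjMatrix ℝ).mulVec v (Sum.inr j)
      = ∑ x : Fin p ⊕ Fin q, (KpqE p q e).adjMatrix ℝ (Sum.inr j) x * v x := rfl
  rw [h0, Fintype.sum_sum_type]
  have h1 : ∀ j' : Fin q, (KpqE p q e).adjMatrix ℝ (Sum.inr j) (Sum.inr j') * v (Sum.inr j') = 0 := by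
    intro j'; simp [SimpleGraph.adjMatrix_apply, kpqE_adj_inr_inr]
  rw [Finset.sum_congr rfl (fun j' _ => h1 j'), Finset.sum_const, smul_zero, add_zero]
  have h2 : ∀ i : Fin p, (KpqE p q e).adjMatrix ℝ (Sum.inr j) (Sum.inl i) * v (Sum.inl i)
      = (if (j.val < q - 1 ∨ i.val < p - (p * q - e)) then (1:ℝ) else 0) * v (Sum.inl i) := by
    intro i
    simp only [SimpleGraph.adjMatrix_apply, kpqE_adj_inr_inl]
  rw [Finset.sum_congr rfl (fun i _ => h2 i)]
  by_cases hj : j.val < q - 1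
  · rw [if_pos hj]
    exact Finset.sum_congr rfl (fun i _ => by rw [if_pos (Or.inl hj), one_mul])
  · rw [if_neg hj]
    refine Finset.sum_congr rfl (fun i _ => ?_)
    by_cases hi : i.val < p - (p * q - e)
    · rw [if_pos (Or.inr hi), if_pos hi, one_mul]
    · rw [if_neg (by tauto), if_neg hi, zero_mul]

end rows

set_option maxHeartbeats 1000000 in
lemma kpqe_mem (p q e : ℕ) (hp : 0 < p) (he : 0 < e) (hpq : p ≤ q)
    (h1 : e ≤ p * q) (h2 : p * q - e < p)
    [DecidableEq (Fin p ⊕ Fin q)] [DecidableRel (KpqE p q e).Adj]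
    (D s t1 rho : ℝ)
    (hDdef : D = ((q:ℝ) - 1) * ((p:ℝ) - (p:ℝ) * q + e) * ((p:ℝ) * q - e))
    (hsdef : s = Real.sqrt ((e:ℝ)^2 - 4 * D))
    (ht1def : t1 = ((e:ℝ) + s) / 2)
    (hquad : t1 ^ 2 = (e:ℝ) * t1 - D)
    (hrhopos : 0 < rho) (hrho2 : rho ^ 2 = t1) :
    rho ∈ spectrum ℝ ((KpqE p q e).adjMatrix ℝ) := by
  have hq : 0 < q := lt_of_lt_of_le hp hpq
  have hmle : p * q - e ≤ p := le_of_lt h2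
  have hMcast : ((p * q - e : ℕ) : ℝ) = (p:ℝ) * q - e := by
    rw [Nat.cast_sub h1, Nat.cast_mul]
  have hpmcast : ((p - (p * q - e) : ℕ) : ℝ) = (p:ℝ) - ((p:ℝ) * q - e) := by
    rw [Nat.cast_sub hmle, hMcast]
  have hq1cast : ((q - 1 : ℕ) : ℝ) = (q:ℝ) - 1 := by
    rw [Nat.cast_sub hq]; simp
  have hppmcast : ((p - (p - (p * q - e)) : ℕ) : ℝ) = (p:ℝ) * q - e := by
    rw [show p - (p - (p * q - e)) = p * q - e by omega, hMcast]
  have hq1R : (1:ℝ) ≤ (q:ℝ) := by exact_mod_cast hq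
  have heR : (1:ℝ) ≤ (e:ℝ) := by exact_mod_cast he
  have hMr0 : (0:ℝ) ≤ (p:ℝ) * q - e := by
    have h1' : (e:ℝ) ≤ (p:ℝ) * q := by exact_mod_cast h1
    linarith
  have hMrP : (p:ℝ) * q - e ≤ (p:ℝ) - 1 := by
    have h2' : (p * q - e : ℕ) + 1 ≤ p := h2
    have h2'' := (Nat.cast_le (α := ℝ)).mpr h2'
    push_cast at h2''
    rw [hMcast] at h2''
    linarith
  have ht1pos : 0 < t1 := by rw [← hrho2]; positivity
  have hs0 : (0:ℝ) ≤ s := hsdef ▸ Real.sqrt_nonneg _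
  have hdisc : (0:ℝ) ≤ (e:ℝ)^2 - 4 * D := by
    rw [hDdef]
    nlinarith [sq_nonneg ((p:ℝ) * ((q:ℝ) - 1) - ((p:ℝ) - ((p:ℝ)*q - e))),
      mul_nonneg (mul_nonneg (by linarith : (0:ℝ) ≤ (q:ℝ) - 1)
        (by linarith : (0:ℝ) ≤ (p:ℝ) - ((p:ℝ)*q - e))) hMr0,
      mul_nonneg (by linarith : (0:ℝ) ≤ (q:ℝ) - 1)
        (by linarith : (0:ℝ) ≤ (p:ℝ) - ((p:ℝ)*q - e))]
  have hs2 : s ^ 2 = (e:ℝ)^2 - 4 * D := by rw [hsdef]; exact Real.sq_sqrt hdisc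
  rw [mem_spectrum_iff_exists]
  have htm : ((p:ℝ) * q - e) * ((q:ℝ) - 1) < t1 := by
    rcases eq_or_lt_of_le (mul_nonneg hMr0 (by linarith : (0:ℝ) ≤ (q:ℝ) - 1)) with h0 | h0
    · rw [← h0]; exact ht1pos
    · have hkey : 2 * (((p:ℝ) * q - e) * ((q:ℝ) - 1)) - e < s := by
        by_contra hcon
        push_neg at hcon
        have h3 : (0:ℝ) ≤ 2 * (((p:ℝ) * q - e) * ((q:ℝ) - 1)) - e := le_trans hs0 hcon
        have h4 : s ^ 2 ≤ (2 * (((p:ℝ) * q - e) * ((q:ℝ) - 1)) - e) ^ 2 := by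
          nlinarith
        rw [hs2, hDdef] at h4
        nlinarith [mul_pos (mul_pos h0 h0)
          (by linarith : (0:ℝ) < (p:ℝ) - ((p:ℝ) * q - e)), sq_nonneg ((q:ℝ) - 1)]
      rw [ht1def]; linarith
  obtain ⟨a, hadef⟩ : ∃ x : ℝ, x = rho * (t1 - ((p:ℝ) * q - e) * ((q:ℝ) - 1)) := ⟨_, rfl⟩
  obtain ⟨b, hbdef⟩ : ∃ x : ℝ, x = rho * ((q:ℝ) - 1) * ((p:ℝ) - ((p:ℝ) * q - e)) := ⟨_, rfl⟩
  obtain ⟨c, hcdef⟩ : ∃ x : ℝ, x = t1 * ((p:ℝ) - ((p:ℝ) * q - e)) := ⟨_, rfl⟩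
  obtain ⟨d, hddef⟩ : ∃ x : ℝ, x = ((p:ℝ) - ((p:ℝ) * q - e)) * (t1 - ((p:ℝ) * q - e) * ((q:ℝ) - 1)) :=
    ⟨_, rfl⟩
  obtain ⟨v, hvinl, hvinr⟩ : ∃ v : Fin p ⊕ Fin q → ℝ,
      (∀ i : Fin p, v (Sum.inl i) = if i.val < p - (p * q - e) then a else b) ∧
      (∀ j : Fin q, v (Sum.inr j) = if j.val < q - 1 then c else d) :=
    ⟨Sum.elim (fun i : Fin p => if i.val < p - (p * q - e) then a else b)
      (fun j : Fin q => if j.val < q - 1 then c else d), fun _ => rfl, fun _ => rfl⟩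
  have hapos : 0 < a := by
    rw [hadef]; exact mul_pos hrhopos (by linarith)
  refine ⟨v, ?_, ?_⟩
  · intro h0
    have h3 := congrFun h0 (Sum.inl ⟨0, hp⟩)
    rw [hvinl] at h3
    rw [if_pos (by simp; omega)] at h3
    simp only [Pi.zero_apply] at h3
    exact absurd h3 (ne_of_gt hapos)
  · have hS1 : ∑ j : Fin q, (if j.val < q - 1 then v (Sum.inr j) else 0)
        = ((q:ℝ) - 1) * c := by
      rw [Finset.sum_congr rfl (fun j _ => by
        by_cases hj : j.val < q - 1 <;> simp [hvinr, hj] :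
        ∀ j ∈ Finset.univ, (if j.val < q - 1 then v (Sum.inr j) else 0)
          = (if j.val < q - 1 then c else 0)),
        sum_fin_ite (q - 1) (Nat.sub_le q 1) c 0, hq1cast]
      ring
    have hSA : ∑ i : Fin p, v (Sum.inl i)
        = ((p:ℝ) - ((p:ℝ) * q - e)) * a + ((p:ℝ) * q - e) * b := by
      rw [Finset.sum_congr rfl (fun i _ => hvinl i),
        sum_fin_ite (p - (p * q - e)) (Nat.sub_le _ _) a b, hpmcast, hppmcast]
    have hSA1 : ∑ i : Fin p, (if i.val < p - (p * q - e) then v (Sum.inl i) else 0)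
        = ((p:ℝ) - ((p:ℝ) * q - e)) * a := by
      rw [Finset.sum_congr rfl (fun i _ => by
        by_cases hi : i.val < p - (p * q - e) <;> simp [hvinl, hi] :
        ∀ i ∈ Finset.univ, (if i.val < p - (p * q - e) then v (Sum.inl i) else 0)
          = (if i.val < p - (p * q - e) then a else 0)),
        sum_fin_ite (p - (p * q - e)) (Nat.sub_le _ _) a 0, hpmcast]
      ring
    have hw : v (Sum.inr ⟨q - 1, by omega⟩) = d := by
      rw [hvinr]; exact if_neg (by simp)
    funext x
    cases x with
    | inl i =>
      rw [row_inl hq, hS1, hw]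
      rw [Pi.smul_apply, hvinl, smul_eq_mul]
      by_cases hi : i.val < p - (p * q - e)
      · rw [if_pos hi, if_pos hi, hadef, hcdef, hddef]
        linear_combination (-(t1 - ((p:ℝ) * q - e) * ((q:ℝ) - 1))) * hrho2 - hquad + hDdef
      · rw [if_neg hi, if_neg hi, add_zero, hbdef, hcdef]
        linear_combination (-(((q:ℝ) - 1) * ((p:ℝ) - ((p:ℝ) * q - e)))) * hrho2
    | inr j =>
      rw [row_inr, Pi.smul_apply, hvinr, smul_eq_mul]
      by_cases hj : j.val < q - 1
      · rw [if_pos hj, if_pos hj, hSA, hadef, hbdef, hcdef]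
        ring
      · rw [if_neg hj, if_neg hj, hSA1, hadef, hddef]
        ring

set_option maxHeartbeats 1000000 in
lemma kpqe_ub (p q e : ℕ) (hp : 0 < p) (he : 0 < e) (hpq : p ≤ q)
    (h1 : e ≤ p * q) (h2 : p * q - e < p)
    [DecidableEq (Fin p ⊕ Fin q)] [DecidableRel (KpqE p q e).Adj]
    (D s t1 rho : ℝ)
    (hDdef : D = ((q:ℝ) - 1) * ((p:ℝ) - (p:ℝ) * q + e) * ((p:ℝ) * q - e))
    (hsdef : s = Real.sqrt ((e:ℝ)^2 - 4 * D))
    (ht1def : t1 = ((e:ℝ) + s) / 2)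
    (hquad : t1 ^ 2 = (e:ℝ) * t1 - D)
    (hrhopos : 0 < rho) (hrho2 : rho ^ 2 = t1) :
    ∀ lam ∈ spectrum ℝ ((KpqE p q e).adjMatrix ℝ), lam ≤ rho := by
  have hq : 0 < q := lt_of_lt_of_le hp hpq
  have hmle : p * q - e ≤ p := le_of_lt h2
  have hMcast : ((p * q - e : ℕ) : ℝ) = (p:ℝ) * q - e := by
    rw [Nat.cast_sub h1, Nat.cast_mul]
  have hpmcast : ((p - (p * q - e) : ℕ) : ℝ) = (p:ℝ) - ((p:ℝ) * q - e) := by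
    rw [Nat.cast_sub hmle, hMcast]
  have hq1cast : ((q - 1 : ℕ) : ℝ) = (q:ℝ) - 1 := by
    rw [Nat.cast_sub hq]; simp
  have hppmcast : ((p - (p - (p * q - e)) : ℕ) : ℝ) = (p:ℝ) * q - e := by
    rw [show p - (p - (p * q - e)) = p * q - e by omega, hMcast]
  have hq1R : (1:ℝ) ≤ (q:ℝ) := by exact_mod_cast hq
  have heR : (1:ℝ) ≤ (e:ℝ) := by exact_mod_cast he
  have hMr0 : (0:ℝ) ≤ (p:ℝ) * q - e := by
    have h1' : (e:ℝ) ≤ (p:ℝ) * q := by exact_mod_cast h1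
    linarith
  have hMrP : (p:ℝ) * q - e ≤ (p:ℝ) - 1 := by
    have h2' : (p * q - e : ℕ) + 1 ≤ p := h2
    have h2'' := (Nat.cast_le (α := ℝ)).mpr h2'
    push_cast at h2''
    rw [hMcast] at h2''
    linarith
  have ht1pos : 0 < t1 := by rw [← hrho2]; positivity
  intro lam hlam
  rw [mem_spectrum_iff_exists] at hlam
  obtain ⟨v, hv0, hveq⟩ := hlam
  rcases le_or_gt lam 0 with hneg | hpos
  · linarith
  have hrow1 : ∀ i : Fin p, lam * v (Sum.inl i)
      = (∑ j : Fin q, if j.val < q - 1 then v (Sum.inr j) else 0)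
        + (if i.val < p - (p * q - e) then v (Sum.inr ⟨q - 1, by omega⟩) else 0) := by
    intro i
    have h3 := congrFun hveq (Sum.inl i)
    rw [row_inl hq] at h3
    exact h3.symm
  have hrow2 : ∀ j : Fin q, lam * v (Sum.inr j)
      = if j.val < q - 1 then (∑ i : Fin p, v (Sum.inl i))
        else (∑ i : Fin p, if i.val < p - (p * q - e) then v (Sum.inl i) else 0) := by
    intro j
    have h3 := congrFun hveq (Sum.inr j)
    rw [row_inr] at h3
    exact h3.symm
  obtain ⟨S1, hS1⟩ : ∃ x : ℝ,
      x = ∑ j : Fin q, if j.val < q - 1 then v (Sum.inr j) else 0 := ⟨_, rfl⟩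
  obtain ⟨w, hw⟩ : ∃ x : ℝ, x = v (Sum.inr ⟨q - 1, by omega⟩) := ⟨_, rfl⟩
  obtain ⟨SA1, hSA1⟩ : ∃ x : ℝ,
      x = ∑ i : Fin p, if i.val < p - (p * q - e) then v (Sum.inl i) else 0 := ⟨_, rfl⟩
  obtain ⟨SA2, hSA2⟩ : ∃ x : ℝ,
      x = ∑ i : Fin p, if i.val < p - (p * q - e) then 0 else v (Sum.inl i) := ⟨_, rfl⟩
  have hT : ∑ i : Fin p, v (Sum.inl i) = SA1 + SA2 := by
    rw [hSA1, hSA2, ← Finset.sum_add_distrib]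
    exact Finset.sum_congr rfl (fun i _ => by
      by_cases hi : i.val < p - (p * q - e) <;> simp [hi])
  rw [← hS1, ← hw] at hrow1
  rw [hT, ← hSA1] at hrow2
  have hEq1 : lam * SA1 = ((p:ℝ) - ((p:ℝ) * q - e)) * (S1 + w) := by
    have hterm : ∀ i : Fin p, lam * (if i.val < p - (p * q - e) then v (Sum.inl i) else 0)
        = (if i.val < p - (p * q - e) then S1 + w else 0) := by
      intro i
      by_cases hi : i.val < p - (p * q - e)
      · rw [if_pos hi, if_pos hi, hrow1 i, if_pos hi]
      · rw [if_neg hi, if_neg hi, mul_zero]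
    rw [hSA1, Finset.mul_sum, Finset.sum_congr rfl (fun i _ => hterm i),
      sum_fin_ite _ (Nat.sub_le _ _) (S1 + w) 0, hpmcast]
    ring
  have hEq2 : lam * SA2 = ((p:ℝ) * q - e) * S1 := by
    have hterm : ∀ i : Fin p, lam * (if i.val < p - (p * q - e) then 0 else v (Sum.inl i))
        = (if i.val < p - (p * q - e) then 0 else S1) := by
      intro i
      by_cases hi : i.val < p - (p * q - e)
      · rw [if_pos hi, if_pos hi, mul_zero]
      · rw [if_neg hi, if_neg hi, hrow1 i, if_neg hi, add_zero]
    rw [hSA2, Finset.mul_sum, Finset.sum_congr rfl (fun i _ => hterm i),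
      sum_fin_ite _ (Nat.sub_le _ _) (0:ℝ) S1, hppmcast]
    ring
  have hEq3 : lam * S1 = ((q:ℝ) - 1) * (SA1 + SA2) := by
    have hterm : ∀ j : Fin q, lam * (if j.val < q - 1 then v (Sum.inr j) else 0)
        = (if j.val < q - 1 then SA1 + SA2 else 0) := by
      intro j
      by_cases hj : j.val < q - 1
      · rw [if_pos hj, if_pos hj, hrow2 j, if_pos hj]
      · rw [if_neg hj, if_neg hj, mul_zero]
    rw [hS1, Finset.mul_sum, Finset.sum_congr rfl (fun j _ => hterm j),
      sum_fin_ite _ (Nat.sub_le q 1) (SA1 + SA2) 0, hq1cast]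
    ring
  have hEq4 : lam * w = SA1 := by
    rw [hw, hrow2 ⟨q - 1, by omega⟩, if_neg (by simp)]
  have eqS : lam ^ 2 * S1
      = ((q:ℝ) - 1) * (((p:ℝ) - ((p:ℝ) * q - e)) * (S1 + w) + ((p:ℝ) * q - e) * S1) := by
    calc lam ^ 2 * S1 = lam * (lam * S1) := by ring
      _ = lam * (((q:ℝ) - 1) * (SA1 + SA2)) := by rw [hEq3]
      _ = ((q:ℝ) - 1) * (lam * SA1 + lam * SA2) := by ring
      _ = _ := by rw [hEq1, hEq2]
  have eqW : lam ^ 2 * w = ((p:ℝ) - ((p:ℝ) * q - e)) * (S1 + w) := by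
    calc lam ^ 2 * w = lam * (lam * w) := by ring
      _ = lam * SA1 := by rw [hEq4]
      _ = _ := hEq1
  have hfS : (lam ^ 4 - (e:ℝ) * lam ^ 2 + D) * S1 = 0 := by
    rw [hDdef]
    linear_combination (lam ^ 2 + ((q:ℝ) - 1) * p - e) * eqS
      + (((q:ℝ) - 1) * ((p:ℝ) - ((p:ℝ) * q - e))) * eqW
  have hfW : (lam ^ 4 - (e:ℝ) * lam ^ 2 + D) * w = 0 := by
    rw [hDdef]
    linear_combination ((p:ℝ) - ((p:ℝ) * q - e)) * eqS
      + (lam ^ 2 + ((p:ℝ) - ((p:ℝ) * q - e)) - e) * eqW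
  have hquart : lam ^ 4 - (e:ℝ) * lam ^ 2 + D = 0 := by
    by_contra hne
    have hS10 : S1 = 0 := (mul_eq_zero.mp hfS).resolve_left hne
    have hw0 : w = 0 := (mul_eq_zero.mp hfW).resolve_left hne
    have hSA10 : SA1 = 0 := by rw [← hEq4, hw0, mul_zero]
    have hSA20 : SA2 = 0 := by
      have h3 : lam * SA2 = 0 := by rw [hEq2, hS10, mul_zero]
      exact (mul_eq_zero.mp h3).resolve_left (ne_of_gt hpos)
    apply hv0
    funext x
    simp only [Pi.zero_apply]
    cases x with
    | inl i =>
      have h3 : lam * v (Sum.inl i) = 0 := by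
        rw [hrow1 i, hS10, hw0]
        by_cases hi : i.val < p - (p * q - e) <;> simp [hi]
      exact (mul_eq_zero.mp h3).resolve_left (ne_of_gt hpos)
    | inr j =>
      have h3 : lam * v (Sum.inr j) = 0 := by
        rw [hrow2 j, hSA10, hSA20]
        by_cases hj : j.val < q - 1 <;> simp [hj]
      exact (mul_eq_zero.mp h3).resolve_left (ne_of_gt hpos)
  have hsq : (2 * lam ^ 2 - e) ^ 2 = (e:ℝ) ^ 2 - 4 * D := by
    linear_combination 4 * hquart
  have hle : 2 * lam ^ 2 - e ≤ s := by
    have h5 : 2 * lam ^ 2 - (e:ℝ) ≤ |2 * lam ^ 2 - (e:ℝ)| := le_abs_self _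
    have h6 : |2 * lam ^ 2 - (e:ℝ)| = s := by
      rw [hsdef, ← hsq, Real.sqrt_sq_eq_abs]
    linarith
  have hlam2 : lam ^ 2 ≤ t1 := by rw [ht1def]; linarith
  by_contra hcon
  push_neg at hcon
  have h7 : rho * rho < lam * lam := mul_self_lt_mul_self hrhopos.le hcon
  have e1 : rho ^ 2 = rho * rho := by ring
  have e2 : lam ^ 2 = lam * lam := by ring
  linarith

set_option maxHeartbeats 1000000 in
theorem stmt11 (p q e : ℕ) (hp : 0 < p) (he : 0 < e) (hpq : p ≤ q)
    (h1 : e ≤ p * q) (h2 : p * q - e < p) :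
    specRad (KpqE p q e) = Real.sqrt (((e : ℝ) + Real.sqrt ((e : ℝ)^2
      - 4 * ((q : ℝ) - 1) * ((p : ℝ) - (p : ℝ) * (q : ℝ) + (e : ℝ))
        * ((p : ℝ) * (q : ℝ) - (e : ℝ)))) / 2) := by
  have hq : 0 < q := lt_of_lt_of_le hp hpq
  have hq1R : (1:ℝ) ≤ (q:ℝ) := by exact_mod_cast hq
  have heR : (1:ℝ) ≤ (e:ℝ) := by exact_mod_cast he
  have hMr0 : (0:ℝ) ≤ (p:ℝ) * q - e := by
    have h1' : (e:ℝ) ≤ (p:ℝ) * q := by exact_mod_cast h1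
    linarith
  have hMrP : (p:ℝ) * q - e ≤ (p:ℝ) - 1 := by
    have h2' : (p * q - e : ℕ) + 1 ≤ p := h2
    have h2'' := (Nat.cast_le (α := ℝ)).mpr h2'
    push_cast at h2''
    rw [Nat.cast_sub h1, Nat.cast_mul] at h2''
    linarith
  obtain ⟨D, hDdef⟩ : ∃ x : ℝ, x = ((q:ℝ) - 1) * ((p:ℝ) - (p:ℝ) * q + e) * ((p:ℝ) * q - e) :=
    ⟨_, rfl⟩
  have hgoalD : (e:ℝ)^2 - 4 * ((q : ℝ) - 1) * ((p : ℝ) - (p : ℝ) * (q : ℝ) + (e : ℝ))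
        * ((p : ℝ) * (q : ℝ) - (e : ℝ)) = (e:ℝ)^2 - 4 * D := by rw [hDdef]; ring
  rw [hgoalD]
  have hdisc : (0:ℝ) ≤ (e:ℝ)^2 - 4 * D := by
    rw [hDdef]
    nlinarith [sq_nonneg ((p:ℝ) * ((q:ℝ) - 1) - ((p:ℝ) - ((p:ℝ)*q - e))),
      mul_nonneg (mul_nonneg (by linarith : (0:ℝ) ≤ (q:ℝ) - 1)
        (by linarith : (0:ℝ) ≤ (p:ℝ) - ((p:ℝ)*q - e))) hMr0,
      mul_nonneg (by linarith : (0:ℝ) ≤ (q:ℝ) - 1)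
        (by linarith : (0:ℝ) ≤ (p:ℝ) - ((p:ℝ)*q - e))]
  obtain ⟨s, hsdef⟩ : ∃ x : ℝ, x = Real.sqrt ((e:ℝ)^2 - 4 * D) := ⟨_, rfl⟩
  rw [show Real.sqrt (((e:ℝ) + Real.sqrt ((e:ℝ)^2 - 4 * D)) / 2)
    = Real.sqrt (((e:ℝ) + s) / 2) by rw [hsdef]]
  have hs0 : (0:ℝ) ≤ s := hsdef ▸ Real.sqrt_nonneg _
  have hs2 : s ^ 2 = (e:ℝ)^2 - 4 * D := by rw [hsdef]; exact Real.sq_sqrt hdisc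
  obtain ⟨t1, ht1def⟩ : ∃ x : ℝ, x = ((e:ℝ) + s) / 2 := ⟨_, rfl⟩
  rw [← ht1def]
  have ht1pos : 0 < t1 := by rw [ht1def]; linarith
  have hquad : t1 ^ 2 = (e:ℝ) * t1 - D := by rw [ht1def]; linear_combination hs2 / 4
  obtain ⟨rho, hrhodef⟩ : ∃ x : ℝ, x = Real.sqrt t1 := ⟨_, rfl⟩
  rw [← hrhodef]
  have hrhopos : 0 < rho := hrhodef ▸ Real.sqrt_pos.mpr ht1pos
  have hrho2 : rho ^ 2 = t1 := by rw [hrhodef]; exact Real.sq_sqrt ht1pos.le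
  letI : DecidableEq (Fin p ⊕ Fin q) := Classical.decEq _
  letI : DecidableRel (KpqE p q e).Adj := Classical.decRel _
  rw [specRad_eq]
  exact IsGreatest.csSup_eq
    ⟨kpqe_mem p q e hp he hpq h1 h2 D s t1 rho hDdef hsdef ht1def hquad hrhopos hrho2,
     fun lam hlam => kpqe_ub p q e hp he hpq h1 h2 D s t1 rho hDdef hsdef ht1def hquad
       hrhopos hrho2 lam hlam⟩
end

section
/- Let p ≤ q and e be positive integers with 0 < pq − e < p, and let d_p, d'_q be real numbers with 1 ≤ d_p ≤ q − 1, 1 ≤ d'_q ≤ p − 1, and d_p + d'_q = e − (p−1)(q−1). Then d_p · d'_q ≥ (q−1)·(p − pq + e). -/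
theorem stmt15 (p q e : ℕ) (hp : 0 < p) (hq : 0 < q) (he : 0 < e) (hpq : p ≤ q)
    (h1 : e < p * q) (h2 : p * q - e < p)
    (dp dq : ℝ) (hdp1 : 1 ≤ dp) (hdp2 : dp ≤ (q : ℝ) - 1)
    (hdq1 : 1 ≤ dq) (hdq2 : dq ≤ (p : ℝ) - 1)
    (hsum : dp + dq = (e : ℝ) - ((p : ℝ) - 1) * ((q : ℝ) - 1)) :
    ((q : ℝ) - 1) * ((p : ℝ) - (p : ℝ) * (q : ℝ) + (e : ℝ)) ≤ dp * dq := by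
  have hpq' : (p : ℝ) ≤ (q : ℝ) := Nat.cast_le.mpr hpq
  nlinarith [mul_nonneg (by linarith : (0:ℝ) ≤ (q : ℝ) - 1 - dp)
    (by linarith : (0:ℝ) ≤ (q : ℝ) - 1 - dq)]
end
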